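/- arXiv:1904.01814 — 5 statements merged into one kernel-verified Lean document; each statement's English description precedes it below -/
import Mathlib

section
/- Let φ : ℝ → ℝ be (k+1)-times continuously differentiable on [θ₀-1, θ₀+1] for some k ≥ 1 with φ^{(k)}(θ₀) ≠ 0, and let u_k ≠ 0. For ε ∈ (0,1), set μ = min{1, ε|φ^{(k)}(θ₀)|(k+1) / (|u_k| · max_{θ₀-1 ≤ τ ≤ θ₀+1}|φ^{(k+1)}(τ)|)}. Then for every polynomial p(t) = Σ_{i=0}^{k} u_i t^i and all t ∈ [-1,1], |p(t) - u_k · k!/(μ^k φ^{(k)}(θ₀)) · φ(μ t + θ₀) - p*(t)| ≤ ε, where p*(t) = Σ_{i=0}^{k-1} (u_i - u_k k! φ^{(i)}(θ₀)/(φ^{(k)}(θ₀) μ^{k-i} i!)) t^i. -/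
open Set Finset


lemma taylor_bound_sharp {f : ℝ → ℝ} {a b C : ℝ} {n : ℕ} (hab : a < b)
    (hf : ContDiffOn ℝ (n + 1 : ℕ) f (Set.Icc a b))
    (hC : ∀ y ∈ Set.Icc a b, |iteratedDerivWithin (n + 1) f (Set.Icc a b) y| ≤ C)
    {x₀ x : ℝ} (hx₀ : x₀ ∈ Set.Icc a b) (hx : x ∈ Set.Icc a b) :
    |f x - taylorWithinEval f n (Set.Icc a b) x₀ x|
      ≤ C * |x - x₀| ^ (n + 1) / (Nat.factorial (n + 1) : ℝ) := by
  have hC0 : 0 ≤ C := le_trans (abs_nonneg _) (hC a ⟨le_rfl, hab.le⟩)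
  have hu : UniqueDiffOn ℝ (Set.Icc a b) := uniqueDiffOn_Icc hab
  have hfn : ContDiffOn ℝ (n : ℕ∞) f (Set.Icc a b) := hf.of_le (by exact_mod_cast n.le_succ)
  have hf' : DifferentiableOn ℝ (iteratedDerivWithin n f (Set.Icc a b)) (Set.Icc a b) :=
    hf.differentiableOn_iteratedDerivWithin (by exact_mod_cast n.lt_succ_self) hu
  set F : ℝ → ℝ := fun t => f x - taylorWithinEval f n (Set.Icc a b) t x with hFdef
  have hFd : ∀ t ∈ Set.Icc a b, HasDerivWithinAt F
      (-(((Nat.factorial n : ℝ)⁻¹ * (x - t) ^ n) * iteratedDerivWithin (n + 1) f (Set.Icc a b) t))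
      (Set.Icc a b) t := by
    intro t ht
    simpa [smul_eq_mul] using
      ((hasDerivWithinAt_taylorWithinEval_at_Icc x hab ht hfn hf').const_sub (f x))
  have hFcont : ContinuousOn F (Set.Icc a b) :=
    continuousOn_const.sub (continuousOn_taylorWithinEval hu hfn)
  have hBd : ∀ c t : ℝ, HasDerivAt (fun t => C * (t - c) ^ (n + 1) / (Nat.factorial (n + 1) : ℝ))
      (C * (t - c) ^ n / (Nat.factorial n : ℝ)) t := by
    intro c t
    have h1 : HasDerivAt (fun t : ℝ => (t - c) ^ (n + 1)) (((n : ℝ) + 1) * (t - c) ^ n) t := by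
      simpa using ((hasDerivAt_id t).sub_const c).fun_pow (n + 1)
    have h2 := (h1.const_mul C).div_const (Nat.factorial (n + 1) : ℝ)
    refine h2.congr_deriv ?_
    have hfac : (Nat.factorial (n + 1) : ℝ) = ((n : ℝ) + 1) * (Nat.factorial n : ℝ) := by
      rw [Nat.factorial_succ]; push_cast; ring
    have hn0 : (Nat.factorial n : ℝ) ≠ 0 := Nat.cast_ne_zero.mpr n.factorial_ne_zero
    rw [hfac]
    field_simp
  rcases lt_trichotomy x x₀ with hlt | heq | hgt
  · -- x < x₀ : integrate forward on [x, x₀]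
    have hsub : Set.Icc x x₀ ⊆ Set.Icc a b := Set.Icc_subset_Icc hx.1 hx₀.2
    have key := image_norm_le_of_norm_deriv_right_le_deriv_boundary
      (f := F)
      (f' := fun t => -(((Nat.factorial n : ℝ)⁻¹ * (x - t) ^ n)
        * iteratedDerivWithin (n + 1) f (Set.Icc a b) t))
      (a := x) (b := x₀)
      (hFcont.mono hsub)
      (fun t ht => by
        have htab : t ∈ Set.Icc a b := ⟨le_trans hx.1 ht.1, le_trans ht.2.le hx₀.2⟩
        refine (hFd t htab).mono_of_mem_nhdsWithin ?_
        refine Filter.mem_of_superset (Icc_mem_nhdsGE_of_mem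
          (⟨le_rfl, lt_of_lt_of_le ht.2 hx₀.2⟩ : t ∈ Set.Ico t b)) ?_
        exact Set.Icc_subset_Icc htab.1 le_rfl)
      (B := fun t => C * (t - x) ^ (n + 1) / (Nat.factorial (n + 1) : ℝ))
      (B' := fun t => C * (t - x) ^ n / (Nat.factorial n : ℝ))
      (by simp [hFdef])
      (hBd x)
      (fun t ht => by
        have htab : t ∈ Set.Icc a b := ⟨le_trans hx.1 ht.1, le_trans ht.2.le hx₀.2⟩
        have h1 : |x - t| = t - x := by
          rw [abs_sub_comm]; exact abs_of_nonneg (by linarith [ht.1])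
        have h2 := hC t htab
        have h3 : (0:ℝ) ≤ t - x := by linarith [ht.1]
        rw [Real.norm_eq_abs, abs_neg, abs_mul, abs_mul, abs_inv, abs_pow, Nat.abs_cast, h1]
        calc ((Nat.factorial n : ℝ))⁻¹ * (t - x) ^ n * |iteratedDerivWithin (n + 1) f (Set.Icc a b) t|
            ≤ ((Nat.factorial n : ℝ))⁻¹ * (t - x) ^ n * C := by
              apply mul_le_mul_of_nonneg_left h2; positivity
          _ = C * (t - x) ^ n / (Nat.factorial n : ℝ) := by ring)
    have hres := key (Set.right_mem_Icc.mpr hlt.le)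
    rw [Real.norm_eq_abs] at hres
    have habs : |x - x₀| = x₀ - x := by
      rw [abs_sub_comm]; exact abs_of_nonneg (by linarith)
    rw [habs]
    simpa [hFdef] using hres
  · subst heq
    simp only [taylorWithinEval_self, sub_self, abs_zero]
    positivity
  · -- x₀ < x : reflected, G s = F (x₀ + x - s) on [x₀, x]
    set G : ℝ → ℝ := fun s => F (x₀ + x - s) with hGdef
    have hsub : Set.Icc x₀ x ⊆ Set.Icc a b := Set.Icc_subset_Icc hx₀.1 hx.2
    have hmaps : Set.MapsTo (fun s => x₀ + x - s) (Set.Icc x₀ x) (Set.Icc x₀ x) := by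
      intro s hs
      simp only [Set.mem_Icc] at *
      constructor <;> linarith [hs.1, hs.2]
    have key := image_norm_le_of_norm_deriv_right_le_deriv_boundary
      (f := G)
      (f' := fun s => ((Nat.factorial n : ℝ)⁻¹ * (x - (x₀ + x - s)) ^ n)
        * iteratedDerivWithin (n + 1) f (Set.Icc a b) (x₀ + x - s))
      (a := x₀) (b := x)
      ((hFcont.mono hsub).comp (by fun_prop) hmaps)
      (fun s hs => by
        have hz : x₀ + x - s ∈ Set.Icc a b := hsub (hmaps ⟨hs.1, hs.2.le⟩)
        have hinner : HasDerivWithinAt (fun s : ℝ => x₀ + x - s) (-1) (Set.Icc x₀ x) s :=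
          ((hasDerivAt_id s).const_sub (x₀ + x)).hasDerivWithinAt
        have hcomp := HasDerivWithinAt.comp (x := s) (hFd _ hz) hinner
          (hmaps.mono_right hsub)
        have hcomp' : HasDerivWithinAt G
            (((Nat.factorial n : ℝ)⁻¹ * (x - (x₀ + x - s)) ^ n)
              * iteratedDerivWithin (n + 1) f (Set.Icc a b) (x₀ + x - s))
            (Set.Icc x₀ x) s := by
          simpa [hGdef, Function.comp_def, mul_neg_one] using hcomp
        refine hcomp'.mono_of_mem_nhdsWithin ?_
        refine Filter.mem_of_superset (Icc_mem_nhdsGE_of_mem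
          (⟨le_rfl, hs.2⟩ : s ∈ Set.Ico s x)) ?_
        exact Set.Icc_subset_Icc hs.1 le_rfl)
      (B := fun s => C * (s - x₀) ^ (n + 1) / (Nat.factorial (n + 1) : ℝ))
      (B' := fun s => C * (s - x₀) ^ n / (Nat.factorial n : ℝ))
      (by
        have e : x₀ + x - x₀ = x := by ring
        simp [hGdef, hFdef, e])
      (hBd x₀)
      (fun s hs => by
        have hz : x₀ + x - s ∈ Set.Icc a b := hsub (hmaps ⟨hs.1, hs.2.le⟩)
        have h1 : x - (x₀ + x - s) = s - x₀ := by ring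
        have h2 := hC _ hz
        have h3 : (0:ℝ) ≤ s - x₀ := by linarith [hs.1]
        rw [Real.norm_eq_abs, abs_mul, abs_mul, abs_inv, abs_pow, Nat.abs_cast, h1,
          abs_of_nonneg h3]
        calc ((Nat.factorial n : ℝ))⁻¹ * (s - x₀) ^ n
              * |iteratedDerivWithin (n + 1) f (Set.Icc a b) (x₀ + x - s)|
            ≤ ((Nat.factorial n : ℝ))⁻¹ * (s - x₀) ^ n * C := by
              apply mul_le_mul_of_nonneg_left h2; positivity
          _ = C * (s - x₀) ^ n / (Nat.factorial n : ℝ) := by ring)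
    have hres := key (Set.right_mem_Icc.mpr hgt.le)
    rw [Real.norm_eq_abs] at hres
    have e2 : x₀ + x - x = x₀ := by ring
    have habs : |x - x₀| = x - x₀ := abs_of_nonneg (by linarith)
    rw [habs]
    simpa [hGdef, hFdef, e2] using hres
/-- Proposition 1 (case 1 ≤ k ≤ s₀ - 1): a degree-k polynomial is replaced,
    up to error ε on [-1,1], by a single neuron plus an explicit polynomial
    of degree k - 1. -/
theorem poly_exchange_single_neuron
    (k : ℕ) (hk : 1 ≤ k) (θ₀ : ℝ) (φ : ℝ → ℝ)
    (hφ : ContDiffOn ℝ (k + 1) φ (Set.Icc (θ₀ - 1) (θ₀ + 1)))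
    (hknz : iteratedDerivWithin k φ (Set.Icc (θ₀ - 1) (θ₀ + 1)) θ₀ ≠ 0)
    (u : ℕ → ℝ) (huk : u k ≠ 0) (ε : ℝ) (hε : ε ∈ Set.Ioo (0:ℝ) 1)
    (Mφ : ℝ)
    (hMg : IsGreatest
      ((fun τ => |iteratedDerivWithin (k + 1) φ (Set.Icc (θ₀ - 1) (θ₀ + 1)) τ|) ''
        Set.Icc (θ₀ - 1) (θ₀ + 1)) Mφ)
    (hMpos : 0 < Mφ)
    (μ : ℝ)
    (hμ : μ = min 1 (ε * |iteratedDerivWithin k φ (Set.Icc (θ₀ - 1) (θ₀ + 1)) θ₀| * (k + 1)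
      / (|u k| * Mφ))) :
    ∀ t ∈ Set.Icc (-1:ℝ) 1,
      |(∑ i ∈ Finset.range (k + 1), u i * t ^ i)
        - u k * (Nat.factorial k)
            / (μ ^ k * iteratedDerivWithin k φ (Set.Icc (θ₀ - 1) (θ₀ + 1)) θ₀)
            * φ (μ * t + θ₀)
        - ∑ i ∈ Finset.range k,
            (u i - u k * (Nat.factorial k)
              * iteratedDerivWithin i φ (Set.Icc (θ₀ - 1) (θ₀ + 1)) θ₀
              / (iteratedDerivWithin k φ (Set.Icc (θ₀ - 1) (θ₀ + 1)) θ₀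
                  * μ ^ (k - i) * (Nat.factorial i))) * t ^ i| ≤ ε := by
  intro t ht
  set D : Set ℝ := Set.Icc (θ₀ - 1) (θ₀ + 1) with hD
  set Q : ℝ := iteratedDerivWithin k φ D θ₀ with hQ
  have hab : θ₀ - 1 < θ₀ + 1 := by linarith
  have habsQ : 0 < |Q| := abs_pos.mpr hknz
  have habsu : 0 < |u k| := abs_pos.mpr huk
  have hμ2 : (0:ℝ) < ε * |Q| * (k + 1) / (|u k| * Mφ) := by
    apply div_pos
    · apply mul_pos (mul_pos hε.1 habsQ); positivity
    · exact mul_pos habsu hMpos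
  have hμpos : 0 < μ := by rw [hμ]; exact lt_min one_pos hμ2
  have hμle1 : μ ≤ 1 := hμ ▸ min_le_left _ _
  have hμle2 : μ ≤ ε * |Q| * (k + 1) / (|u k| * Mφ) := hμ ▸ min_le_right _ _
  have hμne : μ ≠ 0 := hμpos.ne'
  have ht1 : |t| ≤ 1 := abs_le.mpr ⟨ht.1, ht.2⟩
  have hμt : |μ * t| ≤ μ := by
    rw [abs_mul, abs_of_pos hμpos]
    nlinarith [abs_nonneg t]
  set x : ℝ := μ * t + θ₀ with hx
  have hxD : x ∈ D := by
    have := abs_le.mp (hμt.trans hμle1)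
    constructor <;> [linarith [this.1]; linarith [this.2]]
  have hθD : θ₀ ∈ D := by constructor <;> linarith
  have hφ' : ContDiffOn ℝ (k + 1 : ℕ) φ D := by exact_mod_cast hφ
  have hC : ∀ y ∈ D, |iteratedDerivWithin (k + 1) φ D y| ≤ Mφ :=
    fun y hy => hMg.2 ⟨y, hy, rfl⟩
  have hrem := taylor_bound_sharp hab hφ' hC hθD hxD
  set T : ℝ := taylorWithinEval φ k D θ₀ x with hT
  set c : ℝ := u k * (Nat.factorial k : ℝ) / (μ ^ k * Q) with hc
  -- expand the Taylor polynomial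
  have hTsum : T = ∑ i ∈ Finset.range (k + 1),
      ((Nat.factorial i : ℝ))⁻¹ * (μ * t) ^ i * iteratedDerivWithin i φ D θ₀ := by
    rw [hT, taylor_within_apply]
    apply Finset.sum_congr rfl
    intro i _
    rw [smul_eq_mul]
    congr 2
    rw [hx]; ring
  -- key algebraic identity
  have key : (∑ i ∈ Finset.range (k + 1), u i * t ^ i)
      - (∑ i ∈ Finset.range k,
          (u i - u k * (Nat.factorial k : ℝ) * iteratedDerivWithin i φ D θ₀
            / (Q * μ ^ (k - i) * (Nat.factorial i : ℝ))) * t ^ i)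
      = c * T := by
    rw [hTsum, Finset.mul_sum, Finset.sum_range_succ, Finset.sum_range_succ,
      add_sub_right_comm, ← Finset.sum_sub_distrib]
    congr 1
    · apply Finset.sum_congr rfl
      intro i hi
      have hik : i < k := Finset.mem_range.mp hi
      have hpow : μ ^ i * μ ^ (k - i) = μ ^ k := by
        rw [← pow_add]; congr 1; omega
      have hfi : (Nat.factorial i : ℝ) ≠ 0 := Nat.cast_ne_zero.mpr i.factorial_ne_zero
      have hdi : u k * (Nat.factorial k : ℝ) * iteratedDerivWithin i φ D θ₀
          / (Q * μ ^ (k - i) * (Nat.factorial i : ℝ))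
          = c * (((Nat.factorial i : ℝ))⁻¹ * μ ^ i * iteratedDerivWithin i φ D θ₀) := by
        rw [hc, ← hpow]
        field_simp
      rw [mul_pow, sub_mul, sub_sub_cancel]
      rw [hdi]
      ring
    · have hfk : (Nat.factorial k : ℝ) ≠ 0 := Nat.cast_ne_zero.mpr k.factorial_ne_zero
      have hμk : μ ^ k ≠ 0 := pow_ne_zero _ hμne
      rw [mul_pow, hc]
      field_simp
      rw [← hQ]
  have hmain : (∑ i ∈ Finset.range (k + 1), u i * t ^ i)
        - c * φ x
        - (∑ i ∈ Finset.range k,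
            (u i - u k * (Nat.factorial k : ℝ) * iteratedDerivWithin i φ D θ₀
              / (Q * μ ^ (k - i) * (Nat.factorial i : ℝ))) * t ^ i)
      = -(c * (φ x - T)) := by linear_combination key
  rw [hmain, abs_neg, abs_mul]
  have hxθ : |x - θ₀| ≤ μ := by
    rw [hx]; simpa using hμt
  have h1 : |φ x - T| ≤ Mφ * μ ^ (k + 1) / (Nat.factorial (k + 1) : ℝ) := by
    refine hrem.trans ?_
    have hp : |x - θ₀| ^ (k + 1) ≤ μ ^ (k + 1) := pow_le_pow_left₀ (abs_nonneg _) hxθ _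
    gcongr
  have hcabs : |c| = |u k| * (Nat.factorial k : ℝ) / (μ ^ k * |Q|) := by
    rw [hc, abs_div, abs_mul, abs_mul, abs_pow, abs_of_pos hμpos, Nat.abs_cast]
  have h2 : |c| * (Mφ * μ ^ (k + 1) / (Nat.factorial (k + 1) : ℝ)) ≤ ε := by
    have hfk : (0:ℝ) < (Nat.factorial k : ℝ) := by positivity
    have he : |c| * (Mφ * μ ^ (k + 1) / (Nat.factorial (k + 1) : ℝ))
        = |u k| * Mφ * μ / (|Q| * (k + 1)) := by
      rw [hcabs, Nat.factorial_succ, pow_succ]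
      push_cast
      field_simp
    rw [he, div_le_iff₀ (by positivity)]
    have h3 : |u k| * Mφ * μ ≤ |u k| * Mφ * (ε * |Q| * (k + 1) / (|u k| * Mφ)) := by
      apply mul_le_mul_of_nonneg_left hμle2; positivity
    calc |u k| * Mφ * μ ≤ |u k| * Mφ * (ε * |Q| * (k + 1) / (|u k| * Mφ)) := h3
      _ = ε * (|Q| * (k + 1)) := by field_simp
  calc |c| * |φ x - T| ≤ |c| * (Mφ * μ ^ (k + 1) / (Nat.factorial (k + 1) : ℝ)) :=
        mul_le_mul_of_nonneg_left h1 (abs_nonneg c)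
    _ ≤ ε := h2
end

section
/- Let s₀ ≥ 1, 0 < v₀ ≤ 1, c₀ > 0, and let φ : ℝ → ℝ be s₀-times differentiable with φ^{(s₀)}(θ₀) ≠ 0 and |φ^{(s₀)}(t) - φ^{(s₀)}(t')| ≤ c₀|t - t'|^{v₀} for all t, t' ∈ ℝ. Let u ≠ 0 and ε ∈ (0,1), and set μ = min{1, [ε|φ^{(s₀)}(θ₀)| Γ(s₀+v₀+1) / (s₀! Γ(v₀+1) c₀ |u|)]^{1/v₀}}. Then for all t ∈ [-1,1], |u · s₀!/(μ^{s₀} φ^{(s₀)}(θ₀)) · r(t)| ≤ ε, where r(t) = 1/(s₀-1)! ∫_{θ₀}^{μt+θ₀} [φ^{(s₀)}(w) - φ^{(s₀)}(θ₀)](μt+θ₀-w)^{s₀-1} dw. -/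
open Set Real intervalIntegral

lemma real_beta_aux (v₀ : ℝ) (hv₀ : 0 < v₀) (n : ℕ) :
    (∫ x in (0:ℝ)..1, x ^ v₀ * (1-x) ^ n)
      = Real.Gamma (v₀+1) * Real.Gamma ((n:ℝ)+1) / Real.Gamma (v₀ + 1 + ((n:ℝ)+1)) := by
  have hre1 : 0 < Complex.re ((v₀:ℂ)+1) := by simp; linarith
  have hre2 : 0 < Complex.re (((n:ℝ)+1 : ℝ) : ℂ) := by simp; positivity
  have hbi : Complex.betaIntegral ((v₀:ℂ)+1) (((n:ℝ)+1 : ℝ):ℂ)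
      = ((∫ x in (0:ℝ)..1, x ^ v₀ * (1-x) ^ n : ℝ) : ℂ) := by
    rw [Complex.betaIntegral, ← intervalIntegral.integral_ofReal]
    refine intervalIntegral.integral_congr fun x hx => ?_
    rw [Set.uIcc_of_le (by norm_num : (0:ℝ) ≤ 1)] at hx
    obtain ⟨hx0, hx1⟩ := hx
    have e1 : ((v₀:ℂ)+1-1) = (v₀:ℂ) := by ring
    have e2 : ((((n:ℝ)+1 : ℝ):ℂ)-1) = ((n:ℕ):ℂ) := by push_cast; ring
    rw [e1, e2, Complex.cpow_natCast, Complex.ofReal_mul, Complex.ofReal_cpow hx0,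
      Complex.ofReal_pow, Complex.ofReal_sub, Complex.ofReal_one]
  have key := Complex.Gamma_mul_Gamma_eq_betaIntegral hre1 hre2
  rw [hbi] at key
  have c1 : ((v₀:ℂ)+1) = ((v₀+1 : ℝ) : ℂ) := by push_cast; ring
  rw [c1, ← Complex.ofReal_add, Complex.Gamma_ofReal, Complex.Gamma_ofReal,
    Complex.Gamma_ofReal] at key
  have key' : Real.Gamma (v₀+1) * Real.Gamma ((n:ℝ)+1)
      = Real.Gamma (v₀+1+((n:ℝ)+1)) * (∫ x in (0:ℝ)..1, x ^ v₀ * (1-x) ^ n) := by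
    exact_mod_cast key
  have hΓ : 0 < Real.Gamma (v₀+1+((n:ℝ)+1)) := Real.Gamma_pos_of_pos (by positivity)
  field_simp
  linarith [key']

/-- Remainder estimate in the case k = s₀ of Proposition 1. -/
theorem remainder_estimate_top_case
    (s₀ : ℕ) (hs₀ : 1 ≤ s₀) (v₀ c₀ : ℝ) (hv₀ : 0 < v₀) (hv₀1 : v₀ ≤ 1) (hc₀ : 0 < c₀)
    (θ₀ : ℝ) (φ : ℝ → ℝ) (hφ : ContDiff ℝ s₀ φ)
    (hnz : iteratedDeriv s₀ φ θ₀ ≠ 0)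
    (hHolder : ∀ t t' : ℝ, |iteratedDeriv s₀ φ t - iteratedDeriv s₀ φ t'| ≤ c₀ * |t - t'| ^ v₀)
    (u : ℝ) (hu : u ≠ 0) (ε : ℝ) (hε : ε ∈ Set.Ioo (0:ℝ) 1)
    (μ : ℝ)
    (hμ : μ = min 1 ((ε * |iteratedDeriv s₀ φ θ₀| * Real.Gamma ((s₀ : ℝ) + v₀ + 1)
      / ((Nat.factorial s₀) * Real.Gamma (v₀ + 1) * c₀ * |u|)) ^ (1 / v₀))) :
    ∀ t ∈ Set.Icc (-1:ℝ) 1,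
      |u * (Nat.factorial s₀) / (μ ^ s₀ * iteratedDeriv s₀ φ θ₀) *
        ((1 / (Nat.factorial (s₀ - 1))) *
          ∫ w in θ₀..(μ * t + θ₀),
            (iteratedDeriv s₀ φ w - iteratedDeriv s₀ φ θ₀) * (μ * t + θ₀ - w) ^ (s₀ - 1))|
        ≤ ε := by
  intro t ht
  obtain ⟨ht1, ht2⟩ := ht
  obtain ⟨hε0, hε1⟩ := hε
  set F := iteratedDeriv s₀ φ with hFdef
  set A := |F θ₀| with hAdef
  have hA : 0 < A := abs_pos.mpr hnz
  have hu' : 0 < |u| := abs_pos.mpr hu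
  set n : ℕ := s₀ - 1 with hn
  have hsn : s₀ = n + 1 := (Nat.succ_pred_eq_of_pos hs₀).symm
  have hs0 : 0 < (s₀ : ℝ) := by exact_mod_cast hs₀
  have hΓs : 0 < Real.Gamma (s₀ : ℝ) := Real.Gamma_pos_of_pos hs0
  have hΓv : 0 < Real.Gamma (v₀+1) := Real.Gamma_pos_of_pos (by linarith)
  have hΓsv : 0 < Real.Gamma ((s₀:ℝ)+v₀+1) := Real.Gamma_pos_of_pos (by positivity)
  have hfac : (0:ℝ) < (Nat.factorial s₀ : ℝ) := by positivity
  have hfacn : (0:ℝ) < (Nat.factorial n : ℝ) := by positivity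
  set K : ℝ := ε * A * Real.Gamma ((s₀:ℝ) + v₀ + 1)
      / ((Nat.factorial s₀ : ℝ) * Real.Gamma (v₀+1) * c₀ * |u|) with hKdef
  have hKpos : 0 < K := div_pos (by positivity) (by positivity)
  have hμpos : 0 < μ := by
    rw [hμ]; exact lt_min one_pos (Real.rpow_pos_of_pos hKpos _)
  have hμ1 : μ ≤ 1 := by rw [hμ]; exact min_le_left _ _
  have hμK : μ ^ v₀ ≤ K := by
    have h1 : μ ≤ K ^ (1/v₀) := by rw [hμ]; exact min_le_right _ _
    calc μ ^ v₀ ≤ (K^(1/v₀)) ^ v₀ := Real.rpow_le_rpow hμpos.le h1 hv₀.le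
    _ = K := by
        rw [← Real.rpow_mul hKpos.le, one_div, inv_mul_cancel₀ hv₀.ne', Real.rpow_one]
  -- the beta integral
  set B : ℝ := ∫ x in (0:ℝ)..1, x ^ v₀ * (1-x) ^ n with hBdef
  have hBeq : B = Real.Gamma (v₀+1) * Real.Gamma (s₀ : ℝ) / Real.Gamma ((s₀:ℝ)+v₀+1) := by
    have := real_beta_aux v₀ hv₀ n
    have hcast : ((n:ℝ)+1) = (s₀:ℝ) := by rw [hsn]; push_cast; ring
    rw [hcast] at this
    rw [hBdef, this]
    ring_nf
  have hB0 : 0 ≤ B := by rw [hBeq]; positivity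
  -- continuity facts
  have hFc : Continuous F := by
    have := (contDiff_iff_iteratedDeriv.mp hφ).1 s₀ le_rfl
    exact this
  have hrpc : Continuous fun x : ℝ => x ^ v₀ :=
    continuous_iff_continuousAt.mpr fun x => Real.continuousAt_rpow_const x v₀ (Or.inr hv₀.le)
  -- substitution
  set h : ℝ := μ * t with hh
  set g : ℝ → ℝ := fun w => (F w - F θ₀) * (μ * t + θ₀ - w) ^ n with hg
  have hgc : Continuous g := by
    apply Continuous.mul (by fun_prop)
    exact (continuous_const.sub continuous_id).pow n
  set J : ℝ := ∫ x in (0:ℝ)..1, g (h*x+θ₀) with hJdef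
  have hsub : (∫ w in θ₀..(μ*t+θ₀), g w) = h * J := by
    have := intervalIntegral.smul_integral_comp_mul_add (f := g) (a := (0:ℝ)) (b := 1) h θ₀
    rw [smul_eq_mul] at this
    rw [hJdef, this]
    norm_num
    rw [hh]
  -- bound on J
  have hJb : |J| ≤ (c₀ * |h| ^ v₀ * |h| ^ n) * B := by
    have step1 : |J| ≤ ∫ x in (0:ℝ)..1, |g (h*x+θ₀)| :=
      intervalIntegral.abs_integral_le_integral_abs (by norm_num)
    have step2 : (∫ x in (0:ℝ)..1, |g (h*x+θ₀)|)
        ≤ ∫ x in (0:ℝ)..1, (c₀ * |h| ^ v₀ * |h| ^ n) * (x ^ v₀ * (1-x) ^ n) := by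
      apply intervalIntegral.integral_mono_on (by norm_num)
      · exact ((hgc.comp (by fun_prop)).abs).intervalIntegrable _ _
      · exact (Continuous.intervalIntegrable (by fun_prop) _ _)
      · intro x hx
        obtain ⟨hx0, hx1⟩ := hx
        rw [hg]
        simp only [abs_mul, abs_pow]
        have e1 : |F (h*x+θ₀) - F θ₀| ≤ c₀ * (|h| ^ v₀ * x ^ v₀) := by
          have := hHolder (h*x+θ₀) θ₀
          have e : h*x+θ₀-θ₀ = h*x := by ring
          rw [e] at this
          rw [abs_mul, Real.mul_rpow (abs_nonneg h) (abs_nonneg x),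
            abs_of_nonneg hx0] at this
          exact this
        have e2 : |μ * t + θ₀ - (h*x+θ₀)| ^ n = |h| ^ n * (1-x) ^ n := by
          have e : μ * t + θ₀ - (h*x+θ₀) = h * (1-x) := by rw [hh]; ring
          rw [e, abs_mul, abs_of_nonneg (by linarith : (0:ℝ) ≤ 1-x), mul_pow]
        rw [e2]
        calc |F (h*x+θ₀) - F θ₀| * (|h| ^ n * (1-x) ^ n)
            ≤ (c₀ * (|h| ^ v₀ * x ^ v₀)) * (|h| ^ n * (1-x) ^ n) := by
              exact mul_le_mul_of_nonneg_right e1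
                (mul_nonneg (by positivity) (pow_nonneg (by linarith) n))
          _ = (c₀ * |h| ^ v₀ * |h| ^ n) * (x ^ v₀ * (1-x) ^ n) := by ring
    have step3 : (∫ x in (0:ℝ)..1, (c₀ * |h| ^ v₀ * |h| ^ n) * (x ^ v₀ * (1-x) ^ n))
        = (c₀ * |h| ^ v₀ * |h| ^ n) * B := by
      rw [hBdef, ← intervalIntegral.integral_const_mul]
    linarith
  -- bound on the main integral
  have hhμ : |h| ≤ μ := by
    rw [hh, abs_mul, abs_of_pos hμpos]
    calc μ * |t| ≤ μ * 1 := by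
          apply mul_le_mul_of_nonneg_left _ hμpos.le
          exact abs_le.mpr ⟨ht1, ht2⟩
      _ = μ := mul_one μ
  have hIb : |∫ w in θ₀..(μ*t+θ₀), g w| ≤ μ ^ s₀ * μ ^ v₀ * (c₀ * B) := by
    rw [hsub, abs_mul]
    calc |h| * |J| ≤ |h| * ((c₀ * |h| ^ v₀ * |h| ^ n) * B) :=
          mul_le_mul_of_nonneg_left hJb (abs_nonneg h)
      _ = (|h| ^ (n+1)) * |h| ^ v₀ * (c₀ * B) := by ring
      _ ≤ μ ^ (n+1) * μ ^ v₀ * (c₀ * B) := by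
          apply mul_le_mul_of_nonneg_right _ (by positivity)
          apply mul_le_mul (pow_le_pow_left₀ (abs_nonneg h) hhμ _)
            (Real.rpow_le_rpow (abs_nonneg h) hhμ hv₀.le) (by positivity) (by positivity)
      _ = μ ^ s₀ * μ ^ v₀ * (c₀ * B) := by rw [← hsn]
  -- final computation
  set I : ℝ := ∫ w in θ₀..(μ*t+θ₀), g w with hIdef
  have hcoef : (0:ℝ) ≤ |u| * (Nat.factorial s₀ : ℝ) / (μ^s₀ * A) :=
    div_nonneg (by positivity) (mul_nonneg (pow_nonneg hμpos.le _) hA.le)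
  have hsΓ : (s₀:ℝ) * Real.Gamma (s₀:ℝ) = (Nat.factorial s₀ : ℝ) := by
    rw [← Real.Gamma_add_one hs0.ne', Real.Gamma_nat_eq_factorial]
  have hcoef2 : (0:ℝ) ≤ |u| * c₀ * (s₀:ℝ) * B / A :=
    div_nonneg (mul_nonneg (by positivity) hB0) hA.le
  have main : |u * (Nat.factorial s₀ : ℝ) / (μ^s₀ * F θ₀) * (1/(Nat.factorial n : ℝ) * I)| ≤ ε := by
    have habs : |u * (Nat.factorial s₀ : ℝ) / (μ^s₀ * F θ₀) * (1/(Nat.factorial n : ℝ) * I)|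
        = |u| * (Nat.factorial s₀ : ℝ) / (μ^s₀ * A) * (1/(Nat.factorial n : ℝ) * |I|) := by
      simp only [abs_mul, abs_div, abs_pow, abs_one, Nat.abs_cast, abs_of_pos hμpos, ← hAdef]
    rw [habs]
    calc |u| * (Nat.factorial s₀ : ℝ) / (μ^s₀ * A) * (1/(Nat.factorial n : ℝ) * |I|)
        ≤ |u| * (Nat.factorial s₀ : ℝ) / (μ^s₀ * A)
            * (1/(Nat.factorial n : ℝ) * (μ ^ s₀ * μ ^ v₀ * (c₀ * B))) := by
          exact mul_le_mul_of_nonneg_left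
            (mul_le_mul_of_nonneg_left hIb (by positivity)) hcoef
      _ = (|u| * c₀ * (s₀:ℝ) * B / A) * μ ^ v₀ := by
          have hfacs : (Nat.factorial s₀ : ℝ) = (s₀:ℝ) * (Nat.factorial n : ℝ) := by
            rw [hsn]; push_cast [Nat.factorial_succ]; ring
          rw [hfacs]
          field_simp
      _ ≤ (|u| * c₀ * (s₀:ℝ) * B / A) * K := mul_le_mul_of_nonneg_left hμK hcoef2
      _ = ε := by
          rw [hBeq, hKdef]
          field_simp
          linear_combination hsΓ
  exact main
end

section
/- Let g ∈ Lip^{(r,c₀')}_{[0,1/2]} with r = s+v, s ∈ ℕ₀, 0 < v ≤ 1, c₀' > 0, let φ be a bounded sigmoidal function, A ≥ 1, n ∈ ℕ, and t_j = j/(2n). Define b_{A,0}(t) = φ(-4Ant + A), b_{A,j}(t) = φ(-4An(t-t_j)+A) - φ(-4An(t-t_{j-1})+A) for 1 ≤ j ≤ n, and Φ(t) = Σ_{j=0}^{n} T_{s,g,t_j}(t) b_{A,j}(t), where T_{s,g,t_j} is the degree-s Taylor polynomial of g at t_j. Then for all t ∈ [0,1/2], |g(t) - Φ(t)| ≤ C̃₃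 (n δ_φ(A) + n^{-r}), where C̃₃ = 2((c₀' + c₀'‖φ‖_∞)/s! + ‖g‖_{L_∞([0,1/2])}). -/
open Set Finset

lemma taylor_rem_bound (s : ℕ) (v c₀' : ℝ) (hv : 0 < v) (hc : 0 < c₀')
    (g : ℝ → ℝ) (hg : ContDiffOn ℝ s g (Set.Icc 0 (1/2)))
    (hHolder : ∀ t ∈ Set.Icc (0:ℝ) (1/2), ∀ t₀ ∈ Set.Icc (0:ℝ) (1/2),
      |iteratedDerivWithin s g (Set.Icc 0 (1/2)) t
        - iteratedDerivWithin s g (Set.Icc 0 (1/2)) t₀| ≤ c₀' * |t - t₀| ^ v)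
    {t₀ t : ℝ} (ht₀ : t₀ ∈ Set.Icc (0:ℝ) (1/2)) (ht : t ∈ Set.Icc (0:ℝ) (1/2)) :
    |g t - ∑ i ∈ Finset.range (s+1),
        iteratedDerivWithin i g (Set.Icc 0 (1/2)) t₀ / (Nat.factorial i) * (t - t₀)^i|
      ≤ c₀' * max 1 (s:ℝ) / (Nat.factorial s) * |t - t₀| ^ ((s:ℝ) + v) := by
  have hsum : ∑ i ∈ Finset.range (s+1),
      iteratedDerivWithin i g (Set.Icc 0 (1/2)) t₀ / (Nat.factorial i) * (t - t₀)^i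
      = taylorWithinEval g s (Set.Icc 0 (1/2)) t₀ t := by
    rw [taylor_within_apply]
    refine Finset.sum_congr rfl fun i _ => ?_
    rw [smul_eq_mul]; ring
  rw [hsum]
  rcases eq_or_ne t t₀ with rfl | hne
  · rw [taylorWithinEval_self, sub_self, abs_zero]
    positivity
  have hΔ : 0 < |t - t₀| := abs_pos.2 (sub_ne_zero.2 hne)
  cases s with
  | zero =>
    rw [taylor_within_zero_eval]
    have h := hHolder t ht t₀ ht₀
    simp only [iteratedDerivWithin_zero] at h
    refine h.trans (le_of_eq ?_)
    norm_num
  | succ m =>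
    have h01 : (0:ℝ) < 1/2 := by norm_num
    have hUD : UniqueDiffOn ℝ (Set.Icc (0:ℝ) (1/2)) := uniqueDiffOn_Icc h01
    have hgm : ContDiffOn ℝ m g (Set.Icc (0:ℝ) (1/2)) :=
      hg.of_le (by exact_mod_cast Nat.le_succ m)
    have hdiff : DifferentiableOn ℝ (iteratedDerivWithin m g (Set.Icc (0:ℝ) (1/2)))
        (Set.Icc (0:ℝ) (1/2)) :=
      hg.differentiableOn_iteratedDerivWithin (by exact_mod_cast m.lt_succ_self) hUD
    have hmf : ((m.factorial : ℝ)) ≠ 0 := Nat.cast_ne_zero.2 m.factorial_ne_zero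
    have hm1 : (((m+1).factorial : ℝ)) = ((m:ℝ)+1) * m.factorial := by
      push_cast [Nat.factorial_succ]; ring
    set fs := iteratedDerivWithin (m+1) g (Set.Icc (0:ℝ) (1/2)) with hfs
    set k : ℝ → ℝ := fun y => g t - taylorWithinEval g m (Set.Icc (0:ℝ) (1/2)) y t
        - fs t₀ * (t - y)^(m+1) / ((m+1).factorial : ℝ) with hk_def
    have hk : ∀ y ∈ Set.Icc (0:ℝ) (1/2), HasDerivWithinAt k
        (-(((m.factorial : ℝ)⁻¹ * (t - y) ^ m) * (fs y - fs t₀))) (Set.Icc (0:ℝ) (1/2)) y := by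
      intro y hy
      have h1 := hasDerivWithinAt_taylorWithinEval_at_Icc t h01 hy hgm hdiff
      have h2 := (((monomial_has_deriv_aux y t m).const_mul (fs t₀)).div_const
        (((m+1).factorial : ℝ))).hasDerivWithinAt (s := Set.Icc (0:ℝ) (1/2))
      have h3 := ((hasDerivWithinAt_const y (Set.Icc (0:ℝ) (1/2)) (g t)).sub h1).sub h2
      have heq : -(((m.factorial : ℝ)⁻¹ * (t - y) ^ m) * (fs y - fs t₀))
          = 0 - (((m.factorial : ℝ)⁻¹ * (t - y) ^ m) • fs y)
            - fs t₀ * (-((m:ℝ) + 1) * (t - y) ^ m) / (((m+1).factorial : ℝ)) := by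
        rw [smul_eq_mul, hm1]
        field_simp
        ring
      rw [heq]
      exact h3
    have hkt : k t = 0 := by
      simp [hk_def, taylorWithinEval_self]
    set C : ℝ := (m.factorial : ℝ)⁻¹ * |t - t₀| ^ m * (c₀' * |t - t₀| ^ v) with hC_def
    have hCbound : ∀ y ∈ Set.Icc (0:ℝ) (1/2), |t - y| ≤ |t - t₀| → |y - t₀| ≤ |t - t₀| →
        |(-(((m.factorial : ℝ)⁻¹ * (t - y) ^ m) * (fs y - fs t₀)))| ≤ C := by
      intro y hy h1 h2
      rw [abs_neg, abs_mul, abs_mul, abs_pow, abs_inv, Nat.abs_cast]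
      have hH : |fs y - fs t₀| ≤ c₀' * |t - t₀| ^ v :=
        (hHolder y hy t₀ ht₀).trans (mul_le_mul_of_nonneg_left
          (Real.rpow_le_rpow (abs_nonneg _) h2 hv.le) hc.le)
      calc (m.factorial : ℝ)⁻¹ * |t - y| ^ m * |fs y - fs t₀|
          ≤ (m.factorial : ℝ)⁻¹ * |t - t₀| ^ m * (c₀' * |t - t₀| ^ v) := by gcongr
          _ = C := rfl
    have hmain : |k t₀| ≤ C * |t - t₀| := by
      rcases le_total t₀ t with hle | hle
      · have hsub : Set.Icc t₀ t ⊆ Set.Icc (0:ℝ) (1/2) := Set.Icc_subset_Icc ht₀.1 ht.2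
        have := norm_image_sub_le_of_norm_deriv_le_segment'
          (f := k) (f' := fun y => -(((m.factorial : ℝ)⁻¹ * (t - y) ^ m) * (fs y - fs t₀)))
          (fun y hy => (hk y (hsub hy)).mono hsub)
          (fun y hy => by
            refine hCbound y (hsub (Set.Ico_subset_Icc_self hy)) ?_ ?_
            · rw [abs_of_nonneg (by linarith [hy.1, hy.2.le] : (0:ℝ) ≤ t - y),
                abs_of_nonneg (by linarith : (0:ℝ) ≤ t - t₀)]
              linarith [hy.1]
            · rw [abs_of_nonneg (by linarith [hy.1] : (0:ℝ) ≤ y - t₀),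
                abs_of_nonneg (by linarith : (0:ℝ) ≤ t - t₀)]
              linarith [hy.2.le])
          t (Set.right_mem_Icc.2 hle)
        rw [hkt, Real.norm_eq_abs, zero_sub, abs_neg] at this
        rwa [abs_of_nonneg (by linarith : (0:ℝ) ≤ t - t₀)]
      · have hsub : Set.Icc t t₀ ⊆ Set.Icc (0:ℝ) (1/2) := Set.Icc_subset_Icc ht.1 ht₀.2
        have := norm_image_sub_le_of_norm_deriv_le_segment'
          (f := k) (f' := fun y => -(((m.factorial : ℝ)⁻¹ * (t - y) ^ m) * (fs y - fs t₀)))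
          (fun y hy => (hk y (hsub hy)).mono hsub)
          (fun y hy => by
            refine hCbound y (hsub (Set.Ico_subset_Icc_self hy)) ?_ ?_
            · rw [abs_of_nonpos (by linarith [hy.1] : t - y ≤ 0),
                abs_of_nonpos (by linarith : t - t₀ ≤ 0)]
              linarith [hy.2.le]
            · rw [abs_of_nonpos (by linarith [hy.2.le] : y - t₀ ≤ 0),
                abs_of_nonpos (by linarith : t - t₀ ≤ 0)]
              linarith [hy.1])
          t₀ (Set.right_mem_Icc.2 hle)
        rw [hkt, Real.norm_eq_abs, sub_zero] at this
        rwa [abs_of_nonpos (by linarith : t - t₀ ≤ 0), neg_sub]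
    have hrem : g t - taylorWithinEval g (m+1) (Set.Icc (0:ℝ) (1/2)) t₀ t = k t₀ := by
      rw [taylorWithinEval_succ, smul_eq_mul]
      simp only [hk_def]
      rw [hm1]
      field_simp
      ring
    rw [hrem]
    refine hmain.trans (le_of_eq ?_)
    have hpow : |t - t₀| ^ (((m+1 : ℕ) : ℝ) + v) = |t - t₀| ^ (m+1) * |t - t₀| ^ v := by
      rw [Real.rpow_add hΔ, Real.rpow_natCast]
    have hmax : max 1 (((m+1:ℕ)) : ℝ) = (m:ℝ) + 1 := by
      rw [max_eq_right]
      · push_cast; ring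
      · push_cast; linarith [Nat.cast_nonneg (α := ℝ) m]
    have hm0 : ((m:ℝ) + 1) ≠ 0 := by positivity
    rw [hmax, hpow, hm1, hC_def, pow_succ]
    field_simp

lemma arg_ge {A n t x : ℝ} (hA : 0 < A) (hn : 0 < n) (h : t ≤ x) :
    A ≤ -4 * A * n * (t - x) + A := by
  nlinarith [mul_nonneg (mul_pos hA hn).le (sub_nonneg.2 h)]
lemma arg_le {A n t x : ℝ} (hA : 0 < A) (hn : 0 < n) (h : x + 1 / (2 * n) ≤ t) :
    -4 * A * n * (t - x) + A ≤ -A := by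
  have h1 : (1:ℝ) / (2 * n) ≤ t - x := by linarith
  have h2 : (1:ℝ) ≤ (t - x) * (2 * n) := by
    rw [div_le_iff₀ (by positivity)] at h1; linarith
  nlinarith [mul_le_mul_of_nonneg_left h2 hA.le]

set_option maxHeartbeats 2000000 in
/-- Proposition 4: approximation of a Lipschitz-smooth function on [0,1/2] by a
    sum of products of local Taylor polynomials and sigmoidal bump differences. -/
theorem approx_by_taylor_times_sigmoid
    (s : ℕ) (v c₀' : ℝ) (hv : 0 < v) (hv1 : v ≤ 1) (hc : 0 < c₀')
    (g : ℝ → ℝ) (hg : ContDiffOn ℝ s g (Set.Icc 0 (1/2)))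
    (hHolder : ∀ t ∈ Set.Icc (0:ℝ) (1/2), ∀ t₀ ∈ Set.Icc (0:ℝ) (1/2),
      |iteratedDerivWithin s g (Set.Icc 0 (1/2)) t
        - iteratedDerivWithin s g (Set.Icc 0 (1/2)) t₀| ≤ c₀' * |t - t₀| ^ v)
    (φ : ℝ → ℝ) (B : ℝ) (hB : ∀ t, |φ t| ≤ B)
    (hsig1 : Filter.Tendsto φ Filter.atTop (nhds 1))
    (hsig0 : Filter.Tendsto φ Filter.atBot (nhds 0))
    (G : ℝ) (hG : ∀ t ∈ Set.Icc (0:ℝ) (1/2), |g t| ≤ G)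
    (A : ℝ) (hA : 1 ≤ A) (n : ℕ) (hn : 1 ≤ n) :
    ∀ t ∈ Set.Icc (0:ℝ) (1/2),
      |g t - ∑ j ∈ Finset.range (n + 1),
          (∑ i ∈ Finset.range (s + 1),
            iteratedDerivWithin i g (Set.Icc 0 (1/2)) ((j : ℝ) / (2 * n))
              / (Nat.factorial i) * (t - (j : ℝ) / (2 * n)) ^ i) *
          (if j = 0 then φ (-4 * A * n * t + A)
           else φ (-4 * A * n * (t - (j : ℝ) / (2 * n)) + A)
              - φ (-4 * A * n * (t - ((j : ℝ) - 1) / (2 * n)) + A))|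
        ≤ 2 * ((c₀' + c₀' * B) / (Nat.factorial s) + G) *
            ((n : ℝ) * sSup ((fun u => max |1 - φ u| |φ (-u)|) '' Set.Ici A)
              + (n : ℝ) ^ (-((s : ℝ) + v))) := by
  intro t ht
  -- basic positivity facts
  have hA0 : (0:ℝ) < A := lt_of_lt_of_le one_pos hA
  have hn0 : (0:ℝ) < (n:ℝ) := by exact_mod_cast hn
  have hn0' : ((n:ℝ)) ≠ 0 := hn0.ne'
  have hB0 : (0 : ℝ) ≤ B := le_trans (abs_nonneg _) (hB 0)
  have hG0 : (0 : ℝ) ≤ G := le_trans (abs_nonneg _) (hG 0 (by norm_num))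
  have hsf : (0:ℝ) < (Nat.factorial s : ℝ) := by exact_mod_cast s.factorial_pos
  set r : ℝ := (s:ℝ) + v with hr
  have hr0 : 0 < r := by positivity
  set δ : ℝ := sSup ((fun u => max |1 - φ u| |φ (-u)|) '' Set.Ici A) with hδdef
  set q : ℝ := c₀' / (Nat.factorial s : ℝ) with hq
  have hq0 : 0 < q := by positivity
  set nr : ℝ := (n:ℝ) ^ (-r) with hnr
  have hnr0 : 0 ≤ nr := Real.rpow_nonneg hn0.le _
  have hnr1 : nr ≤ 1 := Real.rpow_le_one_of_one_le_of_nonpos (by exact_mod_cast hn) (by linarith)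
  -- facts about δ
  have hbdd : BddAbove ((fun u => max |1 - φ u| |φ (-u)|) '' Set.Ici A) := by
    refine ⟨1 + B, ?_⟩
    rintro x ⟨u, -, rfl⟩
    have h1 := abs_le.mp (hB u)
    have h2 := hB (-u)
    refine max_le ?_ (by linarith)
    rw [abs_le]; constructor <;> linarith
  have hδ_mem : ∀ u, A ≤ u → max |1 - φ u| |φ (-u)| ≤ δ :=
    fun u hu => le_csSup hbdd ⟨u, hu, rfl⟩
  have hφbig : ∀ x, A ≤ x → |1 - φ x| ≤ δ :=
    fun x hx => le_trans (le_max_left _ _) (hδ_mem x hx)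
  have hφsmall : ∀ x, x ≤ -A → |φ x| ≤ δ := by
    intro x hx
    have h := le_trans (le_max_right _ _) (hδ_mem (-x) (by linarith))
    rwa [neg_neg] at h
  have hδ0 : 0 ≤ δ := le_trans (abs_nonneg _) (hφbig A le_rfl)
  have hφbig' : ∀ x, A ≤ x → |φ x| ≤ 1 + δ := by
    intro x hx
    have h := abs_le.mp (hφbig x hx)
    rw [abs_le]; constructor <;> linarith
  -- local abbreviations
  set T : ℕ → ℝ := fun j => ∑ i ∈ Finset.range (s + 1),
      iteratedDerivWithin i g (Set.Icc 0 (1/2)) ((j : ℝ) / (2 * n))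
        / (Nat.factorial i) * (t - (j : ℝ) / (2 * n)) ^ i with hT_def
  set b : ℕ → ℝ := fun j =>
      if j = 0 then φ (-4 * A * n * t + A)
      else φ (-4 * A * n * (t - (j : ℝ) / (2 * n)) + A)
        - φ (-4 * A * n * (t - ((j : ℝ) - 1) / (2 * n)) + A) with hb_def
  show |g t - ∑ j ∈ Finset.range (n + 1), T j * b j|
      ≤ 2 * ((c₀' + c₀' * B) / (Nat.factorial s) + G) * ((n : ℝ) * δ + nr)
  set c : ℕ → ℝ := fun j => φ (-4 * A * n * (t - (j : ℝ) / (2 * n)) + A) with hc_def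
  -- telescoping
  have hb0 : b 0 = c 0 := by
    simp only [hb_def, hc_def, if_pos rfl]
    norm_num
  have hbs : ∀ j : ℕ, b (j+1) = c (j+1) - c j := by
    intro j
    simp only [hb_def, hc_def, if_neg (Nat.succ_ne_zero j)]
    have hj : ((j+1:ℕ):ℝ) - 1 = (j:ℝ) := by push_cast; ring
    rw [hj]
  have tele : ∀ m : ℕ, ∑ j ∈ Finset.range (m+1), b j = c m := by
    intro m
    induction m with
    | zero => rw [Finset.sum_range_one, hb0]
    | succ k ih => rw [Finset.sum_range_succ, ih, hbs k]; ring
  have decomp : g t - ∑ j ∈ Finset.range (n+1), T j * b j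
      = (∑ j ∈ Finset.range (n+1), (g t - T j) * b j) + g t * (1 - c n) := by
    have h1 : ∑ j ∈ Finset.range (n+1), (g t - T j) * b j
        = g t * (∑ j ∈ Finset.range (n+1), b j) - ∑ j ∈ Finset.range (n+1), T j * b j := by
      rw [Finset.mul_sum, ← Finset.sum_sub_distrib]
      exact Finset.sum_congr rfl fun j _ => by ring
    rw [h1, tele n]; ring
  -- grid points are in the interval
  have htj : ∀ j : ℕ, j ≤ n → ((j:ℝ)/(2*n)) ∈ Set.Icc (0:ℝ) (1/2) := by
    intro j hj
    have hjr : (j:ℝ) ≤ (n:ℝ) := by exact_mod_cast hj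
    constructor
    · positivity
    · rw [div_le_iff₀ (by positivity)]; linarith
  -- remainder bounds
  have h2r : (0:ℝ) < (2:ℝ) ^ r := Real.rpow_pos_of_pos two_pos r
  have hms : max 1 (s:ℝ) ≤ (2:ℝ) ^ r := by
    have h1 : (s:ℝ) < 2^(s:ℕ) := by exact_mod_cast (Nat.lt_two_pow_self (n := s))
    have h2 : (1:ℝ) ≤ 2^(s:ℕ) := one_le_pow₀ one_le_two
    calc max 1 (s:ℝ) ≤ (2:ℝ)^(s:ℕ) := max_le h2 h1.le
      _ = (2:ℝ)^((s:ℝ)) := (Real.rpow_natCast 2 s).symm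
      _ ≤ (2:ℝ)^r := Real.rpow_le_rpow_of_exponent_le one_le_two (by rw [hr]; linarith)
  have hKle : c₀' * max 1 (s:ℝ) / (Nat.factorial s : ℝ) ≤ q * (2:ℝ)^r := by
    rw [hq, div_mul_eq_mul_div]
    gcongr
  have hfarT : ∀ j : ℕ, j ≤ n → |g t - T j| ≤ q := by
    intro j hj
    have h := taylor_rem_bound s v c₀' hv hc g hg hHolder (htj j hj) ht
    refine h.trans ?_
    have habs : |t - (j:ℝ)/(2*n)| ≤ 1/2 := by
      have h1 := (htj j hj).1
      have h2 := (htj j hj).2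
      rw [abs_le]
      constructor
      · linarith [ht.1]
      · linarith [ht.2]
    have hhalf : ((1:ℝ)/2)^r = ((2:ℝ)^r)⁻¹ := by
      rw [one_div, Real.inv_rpow (by norm_num : (0:ℝ) ≤ 2)]
    calc c₀' * max 1 (s:ℝ) / (Nat.factorial s : ℝ) * |t - (j:ℝ)/(2*n)| ^ r
        ≤ (q * (2:ℝ)^r) * (((1:ℝ)/2)^r) := by
          refine mul_le_mul hKle (Real.rpow_le_rpow (abs_nonneg _) habs hr0.le)
            (Real.rpow_nonneg (abs_nonneg _) _) (by positivity)
      _ = q := by rw [hhalf, mul_assoc, mul_inv_cancel₀ h2r.ne', mul_one]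
  have hnearT : ∀ j : ℕ, j ≤ n → |t - (j:ℝ)/(2*n)| ≤ 1/(2*n) → |g t - T j| ≤ q * nr := by
    intro j hj hd
    have h := taylor_rem_bound s v c₀' hv hc g hg hHolder (htj j hj) ht
    refine h.trans ?_
    have hinv : ((1:ℝ)/(2*n))^r = ((2:ℝ)^r)⁻¹ * nr := by
      rw [hnr, one_div, Real.inv_rpow (by positivity),
        Real.mul_rpow (by norm_num : (0:ℝ) ≤ 2) hn0.le, mul_inv, Real.rpow_neg hn0.le]
    calc c₀' * max 1 (s:ℝ) / (Nat.factorial s : ℝ) * |t - (j:ℝ)/(2*n)| ^ r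
        ≤ (q * (2:ℝ)^r) * (((1:ℝ)/(2*n))^r) := by
          refine mul_le_mul hKle (Real.rpow_le_rpow (abs_nonneg _) hd hr0.le)
            (Real.rpow_nonneg (abs_nonneg _) _) (by positivity)
      _ = q * nr := by rw [hinv]; field_simp
  -- bump bounds
  have habs_sub : ∀ x y : ℝ, |x - y| ≤ |x| + |y| := fun x y => abs_sub x y
  have hbfarL : ∀ j : ℕ, ((j:ℝ)+1)/(2*n) ≤ t → |b j| ≤ 2*δ := by
    intro j hjt
    rcases Nat.eq_zero_or_pos j with rfl | hj1
    · simp only [hb_def, if_pos rfl]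
      have harg0 : -4*A*(n:ℝ)*t + A = -4*A*(n:ℝ)*(t - 0) + A := by ring
      have hle : (0:ℝ) + 1/(2*n) ≤ t := by
        push_cast at hjt
        have : ((0:ℝ)+1)/(2*n) = 0 + 1/(2*n) := by ring
        linarith [hjt]
      have := hφsmall _ (harg0 ▸ arg_le hA0 hn0 hle)
      linarith [this, hδ0]
    · have hj0 : j ≠ 0 := hj1.ne'
      simp only [hb_def, if_neg hj0]
      have harg1 : -4*A*(n:ℝ)*(t - (j:ℝ)/(2*n)) + A ≤ -A := by
        refine arg_le hA0 hn0 ?_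
        have : (j:ℝ)/(2*n) + 1/(2*n) = ((j:ℝ)+1)/(2*n) := by ring
        linarith
      have harg2 : -4*A*(n:ℝ)*(t - ((j:ℝ)-1)/(2*n)) + A ≤ -A := by
        refine arg_le hA0 hn0 ?_
        have h1 : ((j:ℝ)-1)/(2*n) + 1/(2*n) = (j:ℝ)/(2*n) := by ring
        have h2 : (j:ℝ)/(2*n) ≤ ((j:ℝ)+1)/(2*n) := by gcongr; linarith
        linarith
      calc |φ (-4*A*(n:ℝ)*(t - (j:ℝ)/(2*n)) + A) - φ (-4*A*(n:ℝ)*(t - ((j:ℝ)-1)/(2*n)) + A)|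
          ≤ |φ (-4*A*(n:ℝ)*(t - (j:ℝ)/(2*n)) + A)| + |φ (-4*A*(n:ℝ)*(t - ((j:ℝ)-1)/(2*n)) + A)| :=
            habs_sub _ _
        _ ≤ δ + δ := add_le_add (hφsmall _ harg1) (hφsmall _ harg2)
        _ = 2*δ := by ring
  have hbfarR : ∀ j : ℕ, t ≤ ((j:ℝ)-1)/(2*n) → |b j| ≤ 2*δ := by
    intro j hjt
    have hj0 : j ≠ 0 := by
      rintro rfl
      push_cast at hjt
      have h1 : ((0:ℝ)-1)/(2*n) < 0 := by
        apply div_neg_of_neg_of_pos <;> [linarith; positivity]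
      linarith [ht.1, hjt]
    simp only [hb_def, if_neg hj0]
    have harg1 : A ≤ -4*A*(n:ℝ)*(t - (j:ℝ)/(2*n)) + A := by
      refine arg_ge hA0 hn0 ?_
      have h2 : ((j:ℝ)-1)/(2*n) ≤ (j:ℝ)/(2*n) := by gcongr; linarith
      linarith
    have harg2 : A ≤ -4*A*(n:ℝ)*(t - ((j:ℝ)-1)/(2*n)) + A := arg_ge hA0 hn0 hjt
    have hrw : φ (-4*A*(n:ℝ)*(t - (j:ℝ)/(2*n)) + A) - φ (-4*A*(n:ℝ)*(t - ((j:ℝ)-1)/(2*n)) + A)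
        = (1 - φ (-4*A*(n:ℝ)*(t - ((j:ℝ)-1)/(2*n)) + A))
          - (1 - φ (-4*A*(n:ℝ)*(t - (j:ℝ)/(2*n)) + A)) := by ring
    rw [hrw]
    calc _ ≤ |1 - φ (-4*A*(n:ℝ)*(t - ((j:ℝ)-1)/(2*n)) + A)|
          + |1 - φ (-4*A*(n:ℝ)*(t - (j:ℝ)/(2*n)) + A)| := habs_sub _ _
      _ ≤ δ + δ := add_le_add (hφbig _ harg2) (hφbig _ harg1)
      _ = 2*δ := by ring
  have hufar : ∀ j : ℕ, j ≤ n → (((j:ℝ)+1)/(2*n) ≤ t ∨ t ≤ ((j:ℝ)-1)/(2*n)) →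
      |(g t - T j) * b j| ≤ q * (2*δ) := by
    intro j hj hor
    rw [abs_mul]
    have hb2 : |b j| ≤ 2*δ := by rcases hor with h | h; exacts [hbfarL j h, hbfarR j h]
    exact mul_le_mul (hfarT j hj) hb2 (abs_nonneg _) hq0.le
  -- the telescoped tail
  have hc_n : |1 - c n| ≤ δ := by
    refine hφbig _ (arg_ge hA0 hn0 ?_)
    have : (n:ℝ)/(2*n) = 1/2 := by field_simp
    rw [this]; exact ht.2
  -- the floor point
  set j₀ : ℕ := ⌊2*(n:ℝ)*t⌋₊ with hj₀def
  have hfl : (j₀:ℝ) ≤ 2*(n:ℝ)*t := Nat.floor_le (by nlinarith [ht.1, hn0.le])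
  have hfl2 : 2*(n:ℝ)*t < (j₀:ℝ) + 1 := Nat.lt_floor_add_one _
  have hj₀n : j₀ ≤ n := by
    have h1 : 2*(n:ℝ)*t ≤ (n:ℝ) := by nlinarith [ht.2, hn0]
    calc j₀ ≤ ⌊(n:ℝ)⌋₊ := Nat.floor_mono h1
      _ = n := Nat.floor_natCast n
  clear_value j₀
  have hrhs_eq : (c₀' + c₀' * B) / (Nat.factorial s : ℝ) = q * (1+B) := by
    rw [hq]; ring
  rw [decomp, hrhs_eq]
  have habs_tot : |(∑ j ∈ Finset.range (n+1), (g t - T j) * b j) + g t * (1 - c n)|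
      ≤ |∑ j ∈ Finset.range (n+1), (g t - T j) * b j| + G * δ := by
    refine (abs_add_le _ _).trans (add_le_add_right ?_ _)
    rw [abs_mul]
    exact mul_le_mul (hG t ht) hc_n (abs_nonneg _) hG0
  rcases eq_or_lt_of_le hfl with heq | hlt
  · -- case (a) : t is a grid point
    have hteq : t = (j₀:ℝ)/(2*n) := by
      rw [eq_div_iff (by positivity)]; linarith
    have h0 : g t - T j₀ = 0 := by
      have h := taylor_rem_bound s v c₀' hv hc g hg hHolder (htj j₀ hj₀n) ht
      have hz : |t - (j₀:ℝ)/(2*n)| = 0 := by rw [hteq]; simp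
      rw [hz, Real.zero_rpow hr0.ne', mul_zero] at h
      exact abs_eq_zero.mp (le_antisymm h (abs_nonneg _))
    have hj₀mem : j₀ ∈ Finset.range (n+1) := Finset.mem_range.mpr (Nat.lt_succ_of_le hj₀n)
    have hsum_le : |∑ j ∈ Finset.range (n+1), (g t - T j) * b j| ≤ (n:ℝ) * (q*(2*δ)) := by
      refine (Finset.abs_sum_le_sum_abs _ _).trans ?_
      rw [← Finset.add_sum_erase _ _ hj₀mem, h0, zero_mul, abs_zero, zero_add]
      refine (Finset.sum_le_card_nsmul _ _ (q*(2*δ)) ?_).trans ?_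
      · intro j hj
        have hjne : j ≠ j₀ := Finset.ne_of_mem_erase hj
        have hjn : j ≤ n := Nat.lt_succ_iff.mp (Finset.mem_range.mp (Finset.mem_of_mem_erase hj))
        rcases lt_or_gt_of_ne hjne with hlt' | hgt'
        · refine hufar j hjn (Or.inl ?_)
          rw [hteq]
          gcongr
          exact_mod_cast hlt'
        · refine hufar j hjn (Or.inr ?_)
          rw [hteq]
          gcongr
          have : j₀ + 1 ≤ j := hgt'
          have : (j₀:ℝ) + 1 ≤ (j:ℝ) := by exact_mod_cast this
          linarith
      · rw [Finset.card_erase_of_mem hj₀mem, Finset.card_range, Nat.add_sub_cancel,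
          nsmul_eq_mul]
    refine (habs_tot.trans (add_le_add_left hsum_le _)).trans ?_
    have hδn : G * δ ≤ 2 * G * ((n:ℝ)*δ) := by
      nlinarith [mul_nonneg hG0 hδ0, show (1:ℝ) ≤ (n:ℝ) from by exact_mod_cast hn]
    nlinarith [hδn, mul_nonneg (mul_nonneg (mul_nonneg hq0.le hB0) hn0.le) hδ0,
      mul_nonneg hq0.le hnr0, mul_nonneg (mul_nonneg hq0.le hB0) hnr0,
      mul_nonneg hG0 hnr0]
  · -- case (b) : t strictly between grid points
    have ht1 : (j₀:ℝ)/(2*n) < t := by rw [div_lt_iff₀ (by positivity)]; linarith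
    have ht2 : t < ((j₀:ℝ)+1)/(2*n) := by rw [lt_div_iff₀ (by positivity)]; linarith
    have hj₀lt : j₀ < n := by
      rcases lt_or_eq_of_le hj₀n with h | h
      · exact h
      · exfalso
        have : ((n:ℝ))/(2*n) = 1/2 := by field_simp
        rw [h] at ht1
        rw [this] at ht1
        linarith [ht.2]
    have hsplitd : ((j₀:ℝ)+1)/(2*n) = (j₀:ℝ)/(2*n) + 1/(2*n) := by ring
    have he₁ : |g t - T j₀| ≤ q * nr := by
      refine hnearT j₀ hj₀n ?_
      rw [abs_le]
      constructor <;> [linarith [ht2, hsplitd]; linarith [ht1]]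
    have he₂ : |g t - T (j₀+1)| ≤ q * nr := by
      refine hnearT (j₀+1) hj₀lt ?_
      have hcast : ((j₀+1:ℕ):ℝ) = (j₀:ℝ) + 1 := by push_cast; ring
      rw [hcast, abs_le]
      constructor <;> [linarith [ht2]; linarith [ht1, hsplitd]]
    -- split the sum
    have hpair_sub : ({j₀, j₀+1} : Finset ℕ) ⊆ Finset.range (n+1) := by
      intro x hx
      simp only [Finset.mem_insert, Finset.mem_singleton] at hx
      rcases hx with rfl | rfl
      · exact Finset.mem_range.mpr (Nat.lt_succ_of_le hj₀n)
      · exact Finset.mem_range.mpr (Nat.succ_lt_succ hj₀lt)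
    have hsum_split := Finset.sum_sdiff (f := fun j => (g t - T j) * b j) hpair_sub
    have hpair_ne : j₀ ≠ j₀ + 1 := (Nat.succ_ne_self j₀).symm
    have hpair_sum : ∑ j ∈ ({j₀, j₀+1} : Finset ℕ), (g t - T j) * b j
        = (g t - T j₀) * b j₀ + (g t - T (j₀+1)) * b (j₀+1) := Finset.sum_pair hpair_ne
    -- far part
    have hsdiff_le : |∑ j ∈ Finset.range (n+1) \ ({j₀, j₀+1} : Finset ℕ), (g t - T j) * b j|
        ≤ ((n:ℝ) - 1) * (q*(2*δ)) := by
      refine (Finset.abs_sum_le_sum_abs _ _).trans ?_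
      refine (Finset.sum_le_card_nsmul _ _ (q*(2*δ)) ?_).trans ?_
      · intro j hj
        rw [Finset.mem_sdiff, Finset.mem_range, Finset.mem_insert, Finset.mem_singleton] at hj
        push_neg at hj
        have hjn' := hj.1
        have hjne1 := hj.2.1
        have hjne2 := hj.2.2
        have hjn : j ≤ n := Nat.lt_succ_iff.mp hjn'
        rcases lt_or_gt_of_ne hjne1 with hlt' | hgt'
        · refine hufar j hjn (Or.inl ?_)
          have h1 : (j:ℝ) + 1 ≤ (j₀:ℝ) := by exact_mod_cast hlt'
          have h2 : ((j:ℝ)+1)/(2*n) ≤ (j₀:ℝ)/(2*n) := by gcongr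
          linarith
        · refine hufar j hjn (Or.inr ?_)
          have hge : j₀ + 2 ≤ j := by omega
          have h1 : (j₀:ℝ) + 2 ≤ (j:ℝ) := by exact_mod_cast hge
          have h2 : ((j₀:ℝ)+1)/(2*n) ≤ ((j:ℝ)-1)/(2*n) :=
            (div_le_div_iff_of_pos_right (show (0:ℝ) < 2*n by positivity)).mpr (by linarith)
          linarith
      · rw [Finset.card_sdiff_of_subset hpair_sub, Finset.card_range, Finset.card_pair hpair_ne,
          nsmul_eq_mul]
        have : ((n + 1 - 2 : ℕ) : ℝ) = (n:ℝ) - 1 := by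
          rw [show n + 1 - 2 = n - 1 from by omega, Nat.cast_sub hn]
          norm_num
        rw [this]
    -- near part
    have hxB : |φ (-4*A*(n:ℝ)*(t - (j₀:ℝ)/(2*n)) + A)| ≤ B := hB _
    have hzarg : A ≤ -4*A*(n:ℝ)*(t - ((j₀+1:ℕ):ℝ)/(2*n)) + A := by
      refine arg_ge hA0 hn0 ?_
      push_cast
      linarith [ht2]
    have hz : |φ (-4*A*(n:ℝ)*(t - ((j₀+1:ℕ):ℝ)/(2*n)) + A)| ≤ 1 + δ := hφbig' _ hzarg
    have hnear_le : |(g t - T j₀) * b j₀ + (g t - T (j₀+1)) * b (j₀+1)|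
        ≤ B*(2*(q*nr)) + q*nr*δ + q*nr*(1+δ) := by
      have hb1 : b (j₀+1) = φ (-4*A*(n:ℝ)*(t - ((j₀+1:ℕ):ℝ)/(2*n)) + A)
          - φ (-4*A*(n:ℝ)*(t - (j₀:ℝ)/(2*n)) + A) := by
        simp only [hb_def, if_neg (Nat.succ_ne_zero j₀)]
        have hcast : ((j₀+1:ℕ):ℝ) - 1 = (j₀:ℝ) := by push_cast; ring
        rw [hcast]
      have he12 : |(g t - T j₀) - (g t - T (j₀+1))| ≤ 2*(q*nr) := by
        refine (habs_sub _ _).trans ?_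
        linarith [he₁, he₂]
      rcases Nat.eq_zero_or_pos j₀ with hj₀0 | hj₀pos
      · -- j₀ = 0
        subst hj₀0
        have hb0' : b 0 = φ (-4*A*(n:ℝ)*(t - ((0:ℕ):ℝ)/(2*n)) + A) := by
          simp only [hb_def, if_pos rfl]
          norm_num
        rw [hb0', hb1]
        have hexp : (g t - T 0) * φ (-4*A*(n:ℝ)*(t - ((0:ℕ):ℝ)/(2*n)) + A)
            + (g t - T 1) * (φ (-4*A*(n:ℝ)*(t - ((0+1:ℕ):ℝ)/(2*n)) + A)
              - φ (-4*A*(n:ℝ)*(t - ((0:ℕ):ℝ)/(2*n)) + A))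
            = φ (-4*A*(n:ℝ)*(t - ((0:ℕ):ℝ)/(2*n)) + A) * ((g t - T 0) - (g t - T 1))
              + (g t - T 1) * φ (-4*A*(n:ℝ)*(t - ((0+1:ℕ):ℝ)/(2*n)) + A) := by ring
        rw [hexp]
        refine (abs_add_le _ _).trans ?_
        rw [abs_mul, abs_mul]
        have h1 : |φ (-4*A*(n:ℝ)*(t - ((0:ℕ):ℝ)/(2*n)) + A)| * |(g t - T 0) - (g t - T 1)|
            ≤ B * (2*(q*nr)) := mul_le_mul hxB he12 (abs_nonneg _) hB0
        have h2 : |g t - T 1| * |φ (-4*A*(n:ℝ)*(t - ((0+1:ℕ):ℝ)/(2*n)) + A)|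
            ≤ (q*nr) * (1+δ) := mul_le_mul he₂ hz (abs_nonneg _) (by positivity)
        have hnn : 0 ≤ q*nr*δ := by positivity
        calc _ ≤ B * (2*(q*nr)) + (q*nr) * (1+δ) := add_le_add h1 h2
          _ ≤ B*(2*(q*nr)) + q*nr*δ + q*nr*(1+δ) := by linarith
      · -- j₀ ≥ 1
        have hb0' : b j₀ = φ (-4*A*(n:ℝ)*(t - (j₀:ℝ)/(2*n)) + A)
            - φ (-4*A*(n:ℝ)*(t - ((j₀:ℝ)-1)/(2*n)) + A) := by
          simp only [hb_def, if_neg hj₀pos.ne']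
        have hy : |φ (-4*A*(n:ℝ)*(t - ((j₀:ℝ)-1)/(2*n)) + A)| ≤ δ := by
          refine hφsmall _ (arg_le hA0 hn0 ?_)
          have : ((j₀:ℝ)-1)/(2*n) + 1/(2*n) = (j₀:ℝ)/(2*n) := by ring
          linarith [ht1]
        rw [hb0', hb1]
        have hexp : (g t - T j₀) * (φ (-4*A*(n:ℝ)*(t - (j₀:ℝ)/(2*n)) + A)
              - φ (-4*A*(n:ℝ)*(t - ((j₀:ℝ)-1)/(2*n)) + A))
            + (g t - T (j₀+1)) * (φ (-4*A*(n:ℝ)*(t - ((j₀+1:ℕ):ℝ)/(2*n)) + A)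
              - φ (-4*A*(n:ℝ)*(t - (j₀:ℝ)/(2*n)) + A))
            = φ (-4*A*(n:ℝ)*(t - (j₀:ℝ)/(2*n)) + A) * ((g t - T j₀) - (g t - T (j₀+1)))
              - (g t - T j₀) * φ (-4*A*(n:ℝ)*(t - ((j₀:ℝ)-1)/(2*n)) + A)
              + (g t - T (j₀+1)) * φ (-4*A*(n:ℝ)*(t - ((j₀+1:ℕ):ℝ)/(2*n)) + A) := by ring
        rw [hexp]
        refine (abs_add_le _ _).trans (add_le_add ((habs_sub _ _).trans (add_le_add ?_ ?_)) ?_)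
        · rw [abs_mul]
          exact mul_le_mul hxB he12 (abs_nonneg _) hB0
        · rw [abs_mul]
          exact mul_le_mul he₁ hy (abs_nonneg _) (by positivity)
        · rw [abs_mul]
          exact mul_le_mul he₂ hz (abs_nonneg _) (by positivity)
    -- assemble case (b)
    have hsum_le : |∑ j ∈ Finset.range (n+1), (g t - T j) * b j|
        ≤ ((n:ℝ) - 1) * (q*(2*δ)) + (B*(2*(q*nr)) + q*nr*δ + q*nr*(1+δ)) := by
      rw [← hsum_split, hpair_sum]
      exact (abs_add_le _ _).trans (add_le_add hsdiff_le hnear_le)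
    refine (habs_tot.trans (add_le_add_left hsum_le _)).trans ?_
    have h1 : q*nr*δ ≤ q*δ := by
      have := mul_le_mul_of_nonneg_left hnr1 hq0.le
      nlinarith [hδ0, mul_nonneg hq0.le hδ0]
    nlinarith [h1, mul_nonneg hq0.le hnr0,
      mul_nonneg (mul_nonneg hG0 hδ0)
        (sub_nonneg.2 (show (1:ℝ) ≤ 2*(n:ℝ) by nlinarith [hn0, show (1:ℝ) ≤ (n:ℝ) from by exact_mod_cast hn])),
      mul_nonneg (mul_nonneg (mul_nonneg hq0.le hB0) hn0.le) hδ0,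
      mul_nonneg hG0 hnr0, mul_nonneg hq0.le hδ0,
      mul_nonneg (mul_nonneg hq0.le hB0) hnr0]
end

section
/- Let s ∈ ℕ₀, 0 < v ≤ 1, c₀ > 0, r = s+v, and let g̃ : ℝ → ℝ be s-times differentiable, supported in (-1/2,1/2), with |g̃^{(s)}(t) - g̃^{(s)}(t')| ≤ c₀ 2^{v-1} |t-t'|^v for all t, t' ∈ ℝ. Let N* ∈ ℕ, ξ_j = (2j-1)/(2N*) for j = 1,…,N*, and g*(t) = Σ_{j=1}^{N*} ε_j (N*)^{-r} g̃(N*(t - ξ_j)) for any signs ε_j ∈ {-1,+1}. Then g* is s-times differentiable on [0,1] and |(g*)^{(s)}(t) - (g*)^{(s)}(t')| ≤ c₀ |t - t'|^v for all t, t' ∈ [0,1]. -/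
open Set Finset

-- Jensen: a^v + b^v ≤ 2^(1-v) (a+b)^v
lemma jensen_rpow {v : ℝ} (hv : 0 < v) (hv1 : v ≤ 1) {a b : ℝ} (ha : 0 ≤ a) (hb : 0 ≤ b) :
    a ^ v + b ^ v ≤ 2 ^ (1 - v) * (a + b) ^ v := by
  have hcc := Real.concaveOn_rpow hv.le hv1
  have h := hcc.2 (Set.mem_Ici.2 ha) (Set.mem_Ici.2 hb)
      (by norm_num : (0:ℝ) ≤ 1/2) (by norm_num : (0:ℝ) ≤ 1/2) (by norm_num)
  simp only [smul_eq_mul] at h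
  have h2 : ((1:ℝ)/2 * a + 1/2 * b) = (a + b)/2 := by ring
  rw [h2] at h
  have hd : ((a+b)/2) ^ v = (a+b)^v / 2^v := Real.div_rpow (by linarith) (by norm_num : (0:ℝ) ≤ 2) v
  have h2v : (0:ℝ) < 2 ^ v := Real.rpow_pos_of_pos (by norm_num) v
  have hpow : (2:ℝ) ^ (1 - v) = 2 / 2 ^ v := by
    rw [Real.rpow_sub (by norm_num), Real.rpow_one]
  rw [hpow]
  rw [hd] at h
  rw [div_mul_eq_mul_div, le_div_iff₀ h2v]
  calc (a ^ v + b ^ v) * 2 ^ v ≤ (2 * ((a+b)^v / 2^v)) * 2 ^ v := by nlinarith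
    _ = 2 * (a+b)^v := by field_simp

/-- Statement (5.2) of Lemma 6: the sign-randomized sum of dilated, disjointly
    supported Hölder bumps retains the global (r, c₀)-Hölder smoothness on [0,1]. -/
theorem sign_sum_of_bumps_is_lipschitz
    (s : ℕ) (v c₀ : ℝ) (hv : 0 < v) (hv1 : v ≤ 1) (hc₀ : 0 < c₀)
    (gt : ℝ → ℝ) (hgt : ContDiff ℝ s gt)
    (hsupp : ∀ t : ℝ, t ∉ Set.Ioo (-(1:ℝ)/2) (1/2) → gt t = 0)
    (hHolder : ∀ t t' : ℝ,
      |iteratedDeriv s gt t - iteratedDeriv s gt t'| ≤ c₀ * 2 ^ (v - 1) * |t - t'| ^ v)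
    (Nstar : ℕ) (hN : 1 ≤ Nstar)
    (ε : ℕ → ℝ) (hε : ∀ j, ε j = 1 ∨ ε j = -1)
    (gstar : ℝ → ℝ)
    (hgstar : ∀ t, gstar t = ∑ j ∈ Finset.Icc 1 Nstar,
      ε j * ((Nstar : ℝ) ^ (-((s : ℝ) + v))) *
        gt ((Nstar : ℝ) * (t - (2 * (j : ℝ) - 1) / (2 * Nstar)))) :
    ContDiffOn ℝ s gstar (Set.Icc 0 1) ∧
    ∀ t ∈ Set.Icc (0:ℝ) 1, ∀ t' ∈ Set.Icc (0:ℝ) 1,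
      |iteratedDeriv s gstar t - iteratedDeriv s gstar t'| ≤ c₀ * |t - t'| ^ v := by
  set N : ℝ := (Nstar : ℝ) with hNdef
  have hN1 : (1:ℝ) ≤ N := by rw [hNdef]; exact_mod_cast hN
  have hN0 : (0:ℝ) < N := by linarith
  have hNne : N ≠ 0 := hN0.ne'
  set c : ℝ := N ^ (-((s : ℝ) + v)) with hcdef
  set G : ℝ → ℝ := iteratedDeriv s gt with hGdef
  set ξ : ℕ → ℝ := fun j => (2 * (j : ℝ) - 1) / (2 * N) with hξdef
  -- G vanishes outside (-1/2, 1/2), including at the endpoints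
  have hGint : ∀ u : ℝ, 1/2 < |u| → G u = 0 := by
    intro u hu
    have hev : gt =ᶠ[nhds u] (fun _ => (0:ℝ)) := by
      have hop : IsOpen {x : ℝ | 1/2 < |x|} := isOpen_lt continuous_const continuous_abs
      filter_upwards [hop.mem_nhds hu] with x hx
      refine hsupp x ?_
      rintro ⟨h1, h2⟩
      rcases abs_cases x with ⟨he, _⟩ | ⟨he, _⟩ <;> nlinarith
    calc G u = iteratedDeriv s (fun _ => (0:ℝ)) u := hev.iteratedDeriv_eq s
      _ = 0 := by simp [iteratedDeriv_eq_iteratedFDeriv, iteratedFDeriv_zero_fun]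
  have hG0 : ∀ u : ℝ, 1/2 ≤ |u| → G u = 0 := by
    intro u hu
    by_contra hne
    have habs : 0 < |G u| := abs_pos.2 hne
    have hC : 0 < c₀ * 2 ^ (v - 1) := by positivity
    set δ : ℝ := (|G u| / (2 * (c₀ * 2 ^ (v-1)))) ^ (1/v) with hδdef
    have hδpos : 0 < δ := Real.rpow_pos_of_pos (by positivity) _
    have hδv : δ ^ v = |G u| / (2 * (c₀ * 2 ^ (v-1))) := by
      rw [hδdef, ← Real.rpow_mul (by positivity), one_div, inv_mul_cancel₀ hv.ne', Real.rpow_one]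
    set σ : ℝ := if 0 ≤ u then 1 else -1 with hσdef
    have hout : 1/2 < |u + σ * δ| := by
      rcases le_or_gt 0 u with h | h
      · have : |u| = u := abs_of_nonneg h
        simp only [hσdef, if_pos h, one_mul]
        rw [abs_of_nonneg (by linarith)]
        linarith [this ▸ hu]
      · have : |u| = -u := abs_of_neg h
        simp only [hσdef, if_neg (not_le.2 h), neg_one_mul]
        rw [abs_of_nonpos (by nlinarith [this ▸ hu])]
        nlinarith [this ▸ hu]
    have hzero : G (u + σ * δ) = 0 := hGint _ hout
    have hb := hHolder u (u + σ * δ)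
    rw [hzero, sub_zero] at hb
    have hdist : |u - (u + σ * δ)| = δ := by
      rw [show u - (u + σ*δ) = -(σ*δ) by ring, abs_neg, abs_mul]
      have : |σ| = 1 := by
        rcases le_or_gt 0 u with h | h <;> simp [hσdef, h, not_le.2]
      rw [this, one_mul, abs_of_nonneg hδpos.le]
    rw [hdist, hδv] at hb
    have : c₀ * 2^(v-1) * (|G u| / (2 * (c₀ * 2^(v-1)))) = |G u| / 2 := by
      field_simp
    rw [this] at hb
    linarith
  -- smoothness of gstar
  have hcomp : ∀ j : ℕ, ContDiff ℝ s (fun u : ℝ => gt (N * (u - (2 * (j:ℝ) - 1) / (2 * N)))) := by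
    intro j
    exact hgt.comp (contDiff_const.mul (contDiff_id.sub contDiff_const))
  have hterm : ∀ j : ℕ, ContDiff ℝ s
      (fun u : ℝ => ε j * c * gt (N * (u - (2 * (j:ℝ) - 1) / (2 * N)))) :=
    fun j => contDiff_const.mul (hcomp j)
  have hfun : gstar = fun u => ∑ j ∈ Finset.Icc 1 Nstar,
      ε j * c * gt (N * (u - (2 * (j:ℝ) - 1) / (2 * N))) := funext hgstar
  have hCD : ContDiff ℝ s gstar := by
    rw [hfun]; exact ContDiff.sum fun j _ => hterm j
  set C : ℝ := c * N ^ s with hCdef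
  have hCval : C = N ^ (-v) := by
    rw [hCdef, hcdef, ← Real.rpow_natCast N s, ← Real.rpow_add hN0]
    congr 1
    ring
  have hCpos : 0 < C := by rw [hCval]; exact Real.rpow_pos_of_pos hN0 _
  have hCN : C * N ^ v = 1 := by
    rw [hCval, ← Real.rpow_add hN0]
    simp
  -- iterated derivative of each term
  have htermD : ∀ (j : ℕ) (u : ℝ),
      iteratedDeriv s (fun w : ℝ => ε j * c * gt (N * (w - (2 * (j:ℝ) - 1) / (2 * N)))) u
        = ε j * (C * G (N * u - (j:ℝ) + 1/2)) := by
    intro j u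
    have hsh : ContDiff ℝ s (fun z : ℝ => gt (z + (-(j:ℝ) + 1/2))) :=
      hgt.comp (contDiff_id.add contDiff_const)
    have h1 : (fun w : ℝ => gt (N * (w - (2 * (j:ℝ) - 1) / (2 * N))))
        = fun w : ℝ => gt (N * w + (-(j:ℝ) + 1/2)) := by
      funext w
      congr 1
      field_simp
      ring
    rw [← iteratedDerivWithin_univ,
      iteratedDerivWithin_const_mul (Set.mem_univ u) uniqueDiffOn_univ (ε j * c)
        ((hcomp j).contDiffWithinAt), iteratedDerivWithin_univ, h1]
    have h2 := congrFun (iteratedDeriv_comp_const_mul hsh N) u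
    have h3 := congrFun (iteratedDeriv_comp_add_const s gt (-(j:ℝ) + 1/2)) (N * u)
    rw [h2, h3]
    rw [hGdef]
    ring_nf
    rw [hCdef]; ring
  have hD : ∀ u : ℝ, iteratedDeriv s gstar u
      = ∑ j ∈ Finset.Icc 1 Nstar, ε j * (C * G (N * u - (j:ℝ) + 1/2)) := by
    intro u
    rw [hfun, iteratedDeriv_eq_iteratedFDeriv, iteratedFDeriv_sum (fun j _ => hterm j)]
    simp only [Finset.sum_apply, ContinuousMultilinearMap.sum_apply]
    exact Finset.sum_congr rfl fun j _ => by
      rw [← iteratedDeriv_eq_iteratedFDeriv, htermD j u]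
  -- index of the subinterval containing u
  set J : ℝ → ℕ := fun u => min (⌊N * u⌋₊ + 1) Nstar with hJdef
  have hJmem : ∀ u : ℝ, J u ∈ Finset.Icc 1 Nstar :=
    fun u => Finset.mem_Icc.2 ⟨le_min (Nat.succ_le_succ (Nat.zero_le _)) hN, min_le_right _ _⟩
  have hJub : ∀ u : ℝ, 0 ≤ u → u ≤ 1 → N * u ≤ (J u : ℝ) := by
    intro u hu0 hu1
    have h1 : N * u < ⌊N * u⌋₊ + 1 := Nat.lt_floor_add_one _
    have h2 : N * u ≤ N := by nlinarith
    rw [hJdef]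
    simp only [Nat.cast_min, Nat.cast_add, Nat.cast_one]
    exact le_min (by push_cast; linarith) (by rw [← hNdef]; linarith)
  have hJlb : ∀ u : ℝ, 0 ≤ u → (J u : ℝ) - 1 ≤ N * u := by
    intro u hu0
    have h1 : (⌊N * u⌋₊ : ℝ) ≤ N * u := Nat.floor_le (by positivity)
    have h2 : (J u : ℝ) ≤ (⌊N * u⌋₊ : ℝ) + 1 := by
      rw [hJdef]; push_cast [Nat.cast_min]; exact le_trans (min_le_left _ _) le_rfl
    linarith
  have hvanish : ∀ u : ℝ, 0 ≤ u → u ≤ 1 → ∀ j ∈ Finset.Icc 1 Nstar, j ≠ J u →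
      G (N * u - (j:ℝ) + 1/2) = 0 := by
    intro u hu0 hu1 j hj hne
    rcases Finset.mem_Icc.1 hj with ⟨hj1, hjN⟩
    apply hG0
    have hfl : (⌊N * u⌋₊ : ℝ) ≤ N * u := Nat.floor_le (by positivity)
    have hfl2 : N * u < ⌊N * u⌋₊ + 1 := Nat.lt_floor_add_one _
    rcases lt_or_ge j (⌊N * u⌋₊ + 1) with h | h
    · have hj' : (j : ℝ) ≤ (⌊N * u⌋₊ : ℝ) := by exact_mod_cast Nat.lt_succ_iff.1 h
      have : (j:ℝ) ≤ N * u := le_trans hj' hfl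
      rw [abs_of_nonneg (by linarith)]; linarith
    · have h2 : ⌊N * u⌋₊ + 2 ≤ j := by
        rcases eq_or_lt_of_le h with he | hlt
        · exfalso; apply hne
          rw [hJdef]
          simp only []
          omega
        · omega
      have h2' : (⌊N * u⌋₊ : ℝ) + 2 ≤ (j : ℝ) := by exact_mod_cast h2
      have : N * u ≤ (j:ℝ) - 1 := by linarith
      rw [abs_of_nonpos (by linarith)]; linarith
  have h2v1 : (2:ℝ) ^ (v - 1) ≤ 1 :=
    Real.rpow_le_one_of_one_le_of_nonpos (by norm_num) (by linarith)
  have hεabs : ∀ j, |ε j| = 1 := by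
    intro j; rcases hε j with h | h <;> simp [h]
  -- the key Hölder estimate for t ≤ t'
  have key : ∀ t t' : ℝ, t ∈ Set.Icc (0:ℝ) 1 → t' ∈ Set.Icc (0:ℝ) 1 → t ≤ t' →
      |iteratedDeriv s gstar t - iteratedDeriv s gstar t'| ≤ c₀ * (t' - t) ^ v := by
    intro t t' ht ht' htt
    obtain ⟨ht0, ht1⟩ := ht
    obtain ⟨ht0', ht1'⟩ := ht'
    set d : ℝ := t' - t with hddef
    have hd0 : 0 ≤ d := by linarith
    set f : ℕ → ℝ := fun j =>
      ε j * (C * (G (N * t - (j:ℝ) + 1/2) - G (N * t' - (j:ℝ) + 1/2))) with hfdef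
    have hsum : iteratedDeriv s gstar t - iteratedDeriv s gstar t'
        = ∑ j ∈ Finset.Icc 1 Nstar, f j := by
      rw [hD t, hD t', ← Finset.sum_sub_distrib]
      exact Finset.sum_congr rfl fun j _ => by rw [hfdef]; ring
    have hJmono : J t ≤ J t' := by
      rw [hJdef]
      exact min_le_min (Nat.succ_le_succ (Nat.floor_mono
        (mul_le_mul_of_nonneg_left htt hN0.le))) le_rfl
    rcases eq_or_lt_of_le hJmono with hJeq | hJlt
    · -- same subinterval
      have hone : ∑ j ∈ Finset.Icc 1 Nstar, f j = f (J t) := by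
        refine Finset.sum_eq_single_of_mem (J t) (hJmem t) fun b hb hbne => ?_
        rw [hfdef]
        simp only []
        rw [hvanish t ht0 ht1 b hb hbne, hvanish t' ht0' ht1' b hb (by rw [← hJeq]; exact hbne)]
        ring
      rw [hsum, hone]
      have hGd : |G (N * t - (J t : ℝ) + 1/2) - G (N * t' - (J t : ℝ) + 1/2)|
          ≤ c₀ * 2 ^ (v - 1) * (N ^ v * d ^ v) := by
        have := hHolder (N * t - (J t : ℝ) + 1/2) (N * t' - (J t : ℝ) + 1/2)
        have harg : |N * t - (J t : ℝ) + 1/2 - (N * t' - (J t : ℝ) + 1/2)| = N * d := by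
          rw [show N * t - (J t : ℝ) + 1/2 - (N * t' - (J t : ℝ) + 1/2) = -(N * d) by
            rw [hddef]; ring, abs_neg, abs_of_nonneg (by positivity)]
        rw [harg, Real.mul_rpow hN0.le hd0] at this
        exact this
      rw [hfdef]
      simp only [abs_mul, hεabs, one_mul, abs_of_pos hCpos]
      calc C * |G (N * t - (J t:ℝ) + 1/2) - G (N * t' - (J t:ℝ) + 1/2)|
          ≤ C * (c₀ * 2 ^ (v-1) * (N ^ v * d ^ v)) := by
            exact mul_le_mul_of_nonneg_left hGd hCpos.le
        _ = (C * N ^ v) * (c₀ * 2 ^ (v-1) * d ^ v) := by ring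
        _ = c₀ * 2 ^ (v-1) * d ^ v := by rw [hCN]; ring
        _ ≤ c₀ * (1 * d ^ v) := by
            rw [mul_assoc]
            refine mul_le_mul_of_nonneg_left ?_ hc₀.le
            exact mul_le_mul_of_nonneg_right h2v1 (Real.rpow_nonneg hd0 v)
        _ = c₀ * d ^ v := by ring
    · -- different subintervals
      have hne : J t ≠ J t' := Nat.ne_of_lt hJlt
      have hpair : ∑ j ∈ Finset.Icc 1 Nstar, f j = f (J t) + f (J t') := by
        rw [← Finset.sum_pair hne]
        symm
        refine Finset.sum_subset ?_ ?_
        · intro x hx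
          rcases Finset.mem_insert.1 hx with h | h
          · rw [h]; exact hJmem t
          · rw [Finset.mem_singleton.1 h]; exact hJmem t'
        · intro x hx hnx
          simp only [Finset.mem_insert, Finset.mem_singleton, not_or] at hnx
          rw [hfdef]
          simp only []
          rw [hvanish t ht0 ht1 x hx hnx.1, hvanish t' ht0' ht1' x hx hnx.2]
          ring
      rw [hsum, hpair]
      -- endpoint values
      have hGhalf : G (1/2) = 0 := hG0 _ (le_abs_self _)
      have hGnhalf : G (-(1/2)) = 0 := hG0 _ (by rw [abs_neg]; exact le_abs_self _)
      set a : ℝ := (J t : ℝ) - N * t with hadef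
      set b : ℝ := N * t' - ((J t' : ℝ) - 1) with hbdef
      have ha0 : 0 ≤ a := by rw [hadef]; linarith [hJub t ht0 ht1]
      have hb0 : 0 ≤ b := by rw [hbdef]; linarith [hJlb t' ht0']
      have hab : a + b ≤ N * d := by
        have hJJ : (J t : ℝ) + 1 ≤ (J t' : ℝ) := by exact_mod_cast hJlt
        have hNd : N * d = N * t' - N * t := by rw [hddef]; ring
        rw [hadef, hbdef]
        linarith
      -- bound f (J t)
      have hft : |f (J t)| ≤ C * (c₀ * 2 ^ (v-1) * a ^ v) := by
        rw [hfdef]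
        simp only []
        rw [hvanish t' ht0' ht1' (J t) (hJmem t) hne, sub_zero, abs_mul, hεabs, one_mul,
          abs_mul, abs_of_pos hCpos]
        refine mul_le_mul_of_nonneg_left ?_ hCpos.le
        have := hHolder (N * t - (J t:ℝ) + 1/2) (1/2)
        rw [hGhalf] at this
        calc |G (N * t - (J t:ℝ) + 1/2)| = |G (N * t - (J t:ℝ) + 1/2) - 0| := by rw [sub_zero]
          _ ≤ c₀ * 2 ^ (v-1) * |N * t - (J t:ℝ) + 1/2 - 1/2| ^ v := this
          _ = c₀ * 2 ^ (v-1) * a ^ v := by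
              rw [show N * t - (J t:ℝ) + 1/2 - 1/2 = -a by rw [hadef]; ring, abs_neg,
                abs_of_nonneg ha0]
      -- bound f (J t')
      have hft' : |f (J t')| ≤ C * (c₀ * 2 ^ (v-1) * b ^ v) := by
        rw [hfdef]
        simp only []
        rw [hvanish t ht0 ht1 (J t') (hJmem t') (Ne.symm hne), zero_sub, abs_mul, hεabs, one_mul,
          abs_mul, abs_of_pos hCpos, abs_neg]
        refine mul_le_mul_of_nonneg_left ?_ hCpos.le
        have := hHolder (N * t' - (J t':ℝ) + 1/2) (-(1/2))
        rw [hGnhalf] at this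
        calc |G (N * t' - (J t':ℝ) + 1/2)| = |G (N * t' - (J t':ℝ) + 1/2) - 0| := by
              rw [sub_zero]
          _ ≤ c₀ * 2 ^ (v-1) * |N * t' - (J t':ℝ) + 1/2 - (-(1/2))| ^ v := this
          _ = c₀ * 2 ^ (v-1) * b ^ v := by
              rw [show N * t' - (J t':ℝ) + 1/2 - (-(1/2)) = b by rw [hbdef]; ring,
                abs_of_nonneg hb0]
      calc |f (J t) + f (J t')| ≤ |f (J t)| + |f (J t')| := abs_add_le _ _
        _ ≤ C * (c₀ * 2 ^ (v-1) * a ^ v) + C * (c₀ * 2 ^ (v-1) * b ^ v) := add_le_add hft hft'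
        _ = C * c₀ * 2 ^ (v-1) * (a ^ v + b ^ v) := by ring
        _ ≤ C * c₀ * 2 ^ (v-1) * (2 ^ (1-v) * (a + b) ^ v) := by
            refine mul_le_mul_of_nonneg_left (jensen_rpow hv hv1 ha0 hb0) (by positivity)
        _ = C * c₀ * (2 ^ (v-1) * 2 ^ (1-v)) * (a + b) ^ v := by ring
        _ = C * c₀ * (a + b) ^ v := by
            rw [← Real.rpow_add (by norm_num : (0:ℝ) < 2)]
            norm_num
        _ ≤ C * c₀ * (N * d) ^ v := by
            refine mul_le_mul_of_nonneg_left ?_ (by positivity)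
            exact Real.rpow_le_rpow (by linarith) hab hv.le
        _ = (C * N ^ v) * (c₀ * d ^ v) := by
            rw [Real.mul_rpow hN0.le hd0]; ring
        _ = c₀ * d ^ v := by rw [hCN]; ring
  refine ⟨hCD.contDiffOn, ?_⟩
  intro t ht t' ht'
  rcases le_total t t' with h | h
  · have := key t t' ht ht' h
    rwa [show |t - t'| = t' - t by rw [abs_sub_comm]; exact abs_of_nonneg (by linarith)]
  · have := key t' t ht' ht h
    rwa [abs_sub_comm, show |t - t'| = t - t' from abs_of_nonneg (by linarith)]
end

section
/- Let φ : ℝ → ℝ satisfy Assumption 2 (φ ∈ Lip^{(r₀,c₀)}_ℝ with r₀ = s₀+v₀, s₀ ≥ 2, ‖φ‖_∞, ‖φ'‖_∞ ≤ 1, sigmoidal, and φ^{(j)}(θ₀) ≠ 0 for j = 0,…,s₀). Then for every ε ∈ (0,1) there exists a shallow net h₃(t) = Σ_{j=1}^{3} a_j φ(w_j t + θ₀) with 0 < w_j ≤ 1 and |a_j| ≤ C̃₂ ε^{-6} (if s₀ ≥ 3) or |a_j| ≤ C̃₂ ε^{-6/v₀} (if s₀ = 2), such that |t² - h₃(t)|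 ≤ ε for all t ∈ [-1,1], where C̃₂ depends only on s₀, v₀, φ, θ₀. -/
open Set Finset

set_option maxHeartbeats 1000000 in
/-- Quantitative approximation of t² on [-1,1] by a three-neuron shallow net with
    controlled weights, under Assumption 2 on the activation function. -/
theorem squared_approx_by_shallow_net
    (s₀ : ℕ) (hs₀ : 2 ≤ s₀) (v₀ c₀ : ℝ) (hv₀ : 0 < v₀) (hv₀1 : v₀ ≤ 1) (hc₀ : 0 < c₀)
    (φ : ℝ → ℝ) (θ₀ : ℝ)
    (hφ : ContDiff ℝ s₀ φ)
    (hHolder : ∀ t t' : ℝ,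
      |iteratedDeriv s₀ φ t - iteratedDeriv s₀ φ t'| ≤ c₀ * |t - t'| ^ v₀)
    (hbd : ∀ t, |φ t| ≤ 1) (hbd' : ∀ t, |deriv φ t| ≤ 1)
    (hsig1 : Filter.Tendsto φ Filter.atTop (nhds 1))
    (hsig0 : Filter.Tendsto φ Filter.atBot (nhds 0))
    (hnz : ∀ j ≤ s₀, iteratedDeriv j φ θ₀ ≠ 0) :
    ∃ C : ℝ, 0 < C ∧ ∀ ε : ℝ, ε ∈ Set.Ioo (0:ℝ) 1 →
      ∃ a w : Fin 3 → ℝ,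
        (∀ j, 0 < w j ∧ w j ≤ 1) ∧
        (∀ j, |a j| ≤ if 3 ≤ s₀ then C * ε ^ (-(6:ℝ)) else C * ε ^ (-(6 / v₀))) ∧
        ∀ t ∈ Set.Icc (-1:ℝ) 1, |t ^ 2 - ∑ j, a j * φ (w j * t + θ₀)| ≤ ε := by
  have hD2eq : iteratedDeriv 2 φ = deriv (deriv φ) := by
    rw [iteratedDeriv_succ, iteratedDeriv_one]
  have hdφ : Differentiable ℝ φ := hφ.differentiable (by exact_mod_cast (show s₀ ≠ 0 by omega))
  have hdφ' : Differentiable ℝ (deriv φ) := by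
    have h := hφ.differentiable_iteratedDeriv 1 (by exact_mod_cast hs₀)
    simpa [iteratedDeriv_one] using h
  set D : ℝ := deriv (deriv φ) θ₀ with hDdef
  have hDne : D ≠ 0 := by
    have h := hnz 2 hs₀
    rwa [hD2eq] at h
  set B : ℝ := |D| with hBdef
  have hB : 0 < B := abs_pos.mpr hDne
  set β : ℝ := if 3 ≤ s₀ then (1:ℝ) else v₀ with hβdef
  have hβ0 : 0 < β := by
    rw [hβdef]; split_ifs
    · norm_num
    · exact hv₀
  have hβ1 : β ≤ 1 := by
    rw [hβdef]; split_ifs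
    · norm_num
    · exact hv₀1
  -- Hölder property of the second derivative near θ₀
  obtain ⟨K, hK0, hKb⟩ : ∃ K : ℝ, 0 < K ∧ ∀ u u' : ℝ, |u| ≤ 2 → |u'| ≤ 2 →
      |deriv (deriv φ) (θ₀ + u) - deriv (deriv φ) (θ₀ + u')| ≤ K * |u - u'| ^ β := by
    by_cases h3 : 3 ≤ s₀
    · have hβe : β = 1 := by rw [hβdef, if_pos h3]
      have hd3eq : iteratedDeriv 3 φ = deriv (deriv (deriv φ)) := by
        rw [iteratedDeriv_succ, hD2eq]
      have hc3 : Continuous (iteratedDeriv 3 φ) :=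
        hφ.continuous_iteratedDeriv 3 (by exact_mod_cast h3)
      obtain ⟨M, hM⟩ := (isCompact_Icc (a := θ₀ - 2) (b := θ₀ + 2)).exists_bound_of_continuousOn
        hc3.continuousOn
      have hM0 : 0 ≤ M := le_trans (norm_nonneg _) (hM θ₀ (by constructor <;> linarith))
      have hd2 : Differentiable ℝ (deriv (deriv φ)) := by
        have h := hφ.differentiable_iteratedDeriv 2 (by exact_mod_cast h3)
        rwa [hD2eq] at h
      refine ⟨M + 1, by linarith, ?_⟩
      intro u u' hu hu'
      have hmem : ∀ v : ℝ, |v| ≤ 2 → θ₀ + v ∈ Set.Icc (θ₀ - 2) (θ₀ + 2) := by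
        intro v hv
        have h1 := abs_le.mp hv
        constructor <;> linarith [h1.1, h1.2]
      have := Convex.norm_image_sub_le_of_norm_deriv_le (f := deriv (deriv φ))
        (s := Set.Icc (θ₀ - 2) (θ₀ + 2)) (C := M)
        (fun x _ => hd2 x)
        (fun x hx => by
          have h := hM x hx
          rwa [hd3eq] at h)
        (convex_Icc _ _) (hmem u' hu') (hmem u hu)
      rw [Real.norm_eq_abs, Real.norm_eq_abs] at this
      have heq : θ₀ + u - (θ₀ + u') = u - u' := by ring
      rw [heq] at this
      calc |deriv (deriv φ) (θ₀ + u) - deriv (deriv φ) (θ₀ + u')| ≤ M * |u - u'| := this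
        _ ≤ (M + 1) * |u - u'| ^ β := by
            rw [hβe, Real.rpow_one]
            exact mul_le_mul_of_nonneg_right (by linarith) (abs_nonneg _)
    · have hs2 : s₀ = 2 := by omega
      have hβe : β = v₀ := by rw [hβdef, if_neg h3]
      refine ⟨c₀, hc₀, ?_⟩
      intro u u' _ _
      have h := hHolder (θ₀ + u) (θ₀ + u')
      rw [hs2, hD2eq] at h
      rw [hβe]
      simpa [show θ₀ + u - (θ₀ + u') = u - u' from by ring] using h
  -- first-order second-difference bound
  have hq : ∀ h : ℝ, |h| ≤ 1 →
      |deriv φ (θ₀ + 2*h) - deriv φ (θ₀ + h) - D * h| ≤ K * (2*|h|) ^ β * |h| := by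
    intro h hh
    set f : ℝ → ℝ := fun u => deriv φ (θ₀ + u) - D * u with hfdef
    have hfd : ∀ u : ℝ, HasDerivAt f (deriv (deriv φ) (θ₀ + u) - D) u := by
      intro u
      have h1 : HasDerivAt (fun u : ℝ => deriv φ (θ₀ + u)) (deriv (deriv φ) (θ₀ + u) * 1) u :=
        (hdφ' (θ₀ + u)).hasDerivAt.comp u ((hasDerivAt_id u).const_add θ₀)
      have h2 : HasDerivAt (fun u : ℝ => D * u) (D * 1) u :=
        (hasDerivAt_id u).const_mul D
      have h3 := h1.sub h2
      simp only [mul_one] at h3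
      exact h3
    have habs : ∀ u ∈ Set.uIcc h (2*h), |u| ≤ 2 * |h| := by
      intro u hu
      rcases Set.mem_uIcc.mp hu with ⟨h1, h2⟩ | ⟨h1, h2⟩ <;>
        · rw [abs_le]; constructor <;> nlinarith [le_abs_self h, neg_abs_le h, abs_nonneg h]
    have hbound : ∀ u ∈ Set.uIcc h (2*h), ‖deriv f u‖ ≤ K * (2*|h|) ^ β := by
      intro u hu
      rw [(hfd u).deriv, Real.norm_eq_abs]
      have hu2 : |u| ≤ 2 := le_trans (habs u hu) (by linarith)
      have h1 := hKb u 0 hu2 (by norm_num)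
      rw [sub_zero, add_zero] at h1
      calc |deriv (deriv φ) (θ₀ + u) - D| ≤ K * |u| ^ β := h1
        _ ≤ K * (2*|h|) ^ β := by
            exact mul_le_mul_of_nonneg_left
              (Real.rpow_le_rpow (abs_nonneg u) (habs u hu) hβ0.le) hK0.le
    have hmvt := Convex.norm_image_sub_le_of_norm_deriv_le
      (fun u hu => (hfd u).differentiableAt) hbound (convex_uIcc _ _)
      (Set.left_mem_uIcc (a := h) (b := 2*h)) (Set.right_mem_uIcc (a := h) (b := 2*h))
    rw [Real.norm_eq_abs, Real.norm_eq_abs] at hmvt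
    have heq : deriv φ (θ₀ + 2*h) - deriv φ (θ₀ + h) - D * h = f (2*h) - f h := by
      simp only [hfdef]; ring
    rw [heq]
    calc |f (2*h) - f h| ≤ K * (2*|h|) ^ β * |2*h - h| := hmvt
      _ = K * (2*|h|) ^ β * |h| := by rw [show 2*h - h = h by ring]
  -- second-order second-difference bound
  have hg : ∀ h : ℝ, |h| ≤ 1 →
      |φ (θ₀ + 2*h) - 2*φ (θ₀ + h) + φ θ₀ - D * h^2| ≤ 2*K*(2*|h|) ^ β * h^2 := by
    intro h hh
    set g : ℝ → ℝ := fun u => φ (θ₀ + 2*u) - 2*φ (θ₀ + u) + φ θ₀ - D * u^2 with hgdef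
    have hgd : ∀ u : ℝ, HasDerivAt g
        (2*(deriv φ (θ₀ + 2*u) - deriv φ (θ₀ + u) - D * u)) u := by
      intro u
      have h1 : HasDerivAt (fun u : ℝ => φ (θ₀ + 2*u)) (deriv φ (θ₀ + 2*u) * (2*1)) u :=
        (hdφ (θ₀ + 2*u)).hasDerivAt.comp u (((hasDerivAt_id u).const_mul 2).const_add θ₀)
      have h2 : HasDerivAt (fun u : ℝ => 2*φ (θ₀ + u)) (2*(deriv φ (θ₀ + u) * 1)) u :=
        ((hdφ (θ₀ + u)).hasDerivAt.comp u ((hasDerivAt_id u).const_add θ₀)).const_mul 2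
      have h3 : HasDerivAt (fun u : ℝ => D * u^2) (D * (2*u^1)) u :=
        (hasDerivAt_pow 2 u).const_mul D
      have h4 := ((h1.sub h2).add_const (φ θ₀)).sub h3
      have h5 : HasDerivAt g (deriv φ (θ₀ + 2*u) * (2*1) - 2*(deriv φ (θ₀ + u) * 1) - D * (2*u^1)) u := h4
      convert h5 using 1
      ring
    have habs : ∀ u ∈ Set.uIcc 0 h, |u| ≤ |h| := by
      intro u hu
      rcases Set.mem_uIcc.mp hu with ⟨h1, h2⟩ | ⟨h1, h2⟩ <;>
        · rw [abs_le]; constructor <;> nlinarith [le_abs_self h, neg_abs_le h, abs_nonneg h]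
    have hbound : ∀ u ∈ Set.uIcc 0 h, ‖deriv g u‖ ≤ 2*(K * (2*|h|) ^ β * |h|) := by
      intro u hu
      rw [(hgd u).deriv, Real.norm_eq_abs, abs_mul, abs_two]
      have hu1 : |u| ≤ 1 := le_trans (habs u hu) hh
      have h1 := hq u hu1
      have h2 : K * (2*|u|) ^ β * |u| ≤ K * (2*|h|) ^ β * |h| := by
        have hr : (2*|u|) ^ β ≤ (2*|h|) ^ β :=
          Real.rpow_le_rpow (by positivity) (by linarith [habs u hu]) hβ0.le
        have hmm := mul_le_mul hr (habs u hu) (abs_nonneg u)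
          (Real.rpow_nonneg (by positivity) β)
        calc K * (2*|u|) ^ β * |u| = K * ((2*|u|) ^ β * |u|) := by ring
          _ ≤ K * ((2*|h|) ^ β * |h|) := mul_le_mul_of_nonneg_left hmm hK0.le
          _ = K * (2*|h|) ^ β * |h| := by ring
      have := le_trans h1 h2
      linarith
    have hmvt := Convex.norm_image_sub_le_of_norm_deriv_le
      (fun u hu => (hgd u).differentiableAt) hbound (convex_uIcc _ _)
      (Set.left_mem_uIcc (a := (0:ℝ)) (b := h)) (Set.right_mem_uIcc (a := (0:ℝ)) (b := h))
    rw [Real.norm_eq_abs, Real.norm_eq_abs] at hmvt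
    have hg0 : g 0 = 0 := by
      show φ (θ₀ + 2*0) - 2*φ (θ₀ + 0) + φ θ₀ - D * 0^2 = 0
      rw [show θ₀ + 2*(0:ℝ) = θ₀ from by ring, show θ₀ + (0:ℝ) = θ₀ from by ring]
      ring
    rw [hg0, sub_zero, sub_zero] at hmvt
    calc |φ (θ₀ + 2*h) - 2*φ (θ₀ + h) + φ θ₀ - D * h^2| = |g h| := rfl
      _ ≤ 2*(K * (2*|h|) ^ β * |h|) * |h| := hmvt
      _ = 2*K*(2*|h|) ^ β * h^2 := by
            rw [show (2:ℝ)*(K * (2*|h|) ^ β * |h|) * |h| = 2*K*(2*|h|) ^ β * (|h| * |h|) from by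
              ring, abs_mul_abs_self, ← pow_two]
  -- global Lipschitz bound for φ
  have hLip : ∀ x y : ℝ, |φ x - φ y| ≤ |x - y| := by
    intro x y
    have h := Convex.norm_image_sub_le_of_norm_deriv_le (f := φ) (s := Set.univ) (C := 1)
      (fun u _ => hdφ u)
      (fun u _ => by simpa [Real.norm_eq_abs] using hbd' u)
      convex_univ (Set.mem_univ y) (Set.mem_univ x)
    simpa [Real.norm_eq_abs] using h
  -- constants
  set c₁ : ℝ := min (1/2) ((B/(8*K)) ^ (1/β)) with hc₁def
  have hc₁0 : 0 < c₁ := lt_min (by norm_num) (Real.rpow_pos_of_pos (by positivity) _)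
  have hc₁half : c₁ ≤ 1/2 := min_le_left _ _
  have hc₁β : c₁ ^ β ≤ B/(8*K) := by
    calc c₁ ^ β ≤ ((B/(8*K)) ^ (1/β)) ^ β :=
          Real.rpow_le_rpow hc₁0.le (min_le_right _ _) hβ0.le
      _ = B/(8*K) := by
          rw [← Real.rpow_mul (by positivity), one_div, inv_mul_cancel₀ hβ0.ne', Real.rpow_one]
  refine ⟨2/(B * c₁^2), by positivity, ?_⟩
  intro ε hε
  obtain ⟨hε0, hε1⟩ := hε
  set w : ℝ := c₁ * ε ^ (1/β) with hwdef
  have hεr0 : 0 < ε ^ (1/β) := Real.rpow_pos_of_pos hε0 _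
  have hεr1 : ε ^ (1/β) ≤ 1 := Real.rpow_le_one hε0.le hε1.le (by positivity)
  have hw0 : 0 < w := mul_pos hc₁0 hεr0
  have hwhalf : w ≤ 1/2 := le_trans (mul_le_of_le_one_right hc₁0.le hεr1) hc₁half
  have hwβeq : w ^ β = c₁ ^ β * ε := by
    rw [hwdef, Real.mul_rpow hc₁0.le hεr0.le, ← Real.rpow_mul hε0.le,
      one_div, inv_mul_cancel₀ hβ0.ne', Real.rpow_one]
  have hwβ : w ^ β ≤ B/(8*K) * ε := by
    rw [hwβeq]; exact mul_le_mul_of_nonneg_right hc₁β hε0.le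
  set δ : ℝ := min 1 (ε/2 * B * w^2) with hδdef
  have hδ0 : 0 < δ := lt_min one_pos (by positivity)
  have hδ1 : δ ≤ 1 := min_le_left _ _
  have hδle : δ ≤ ε/2 * B * w^2 := min_le_right _ _
  set a : ℝ := 1/(D * w^2) with hadef
  have haabs : |a| = 1/(B * w^2) := by
    rw [hadef, abs_div, abs_one, abs_mul, hBdef, abs_pow, abs_of_pos hw0]
  refine ⟨![a, -2*a, a], ![2*w, w, δ], ?_, ?_, ?_⟩
  · intro j
    fin_cases j
    · exact ⟨by simpa using by linarith, by simpa using by linarith⟩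
    · exact ⟨by simpa using hw0, by simpa using by linarith⟩
    · exact ⟨by simpa using hδ0, by simpa using hδ1⟩
  · -- coefficient bounds
    have hw2 : w^2 = c₁^2 * ε ^ ((2:ℝ)/β) := by
      rw [hwdef, mul_pow, ← Real.rpow_natCast (ε ^ (1/β)) 2, ← Real.rpow_mul hε0.le,
        show 1/β * ((2:ℕ):ℝ) = 2/β from by push_cast; ring]
    have h2a : 2 * |a| ≤ 2/(B * c₁^2) * ε ^ (-(2/β)) := by
      have hεr : (0:ℝ) < ε ^ ((2:ℝ)/β) := Real.rpow_pos_of_pos hε0 _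
      rw [haabs, hw2, Real.rpow_neg hε0.le]
      have heq : 2 * (1/(B * (c₁^2 * ε ^ ((2:ℝ)/β)))) = 2/(B*c₁^2) * (ε ^ ((2:ℝ)/β))⁻¹ := by
        field_simp
      exact le_of_eq heq
    intro j
    have hCpos : (0:ℝ) < 2/(B * c₁^2) := by positivity
    have hmono : ε ^ (-(2/β)) ≤ if 3 ≤ s₀ then ε ^ (-(6:ℝ)) else ε ^ (-(6/v₀)) := by
      split_ifs with h3
      · have hβe : β = 1 := by rw [hβdef, if_pos h3]
        rw [hβe]
        exact Real.rpow_le_rpow_of_exponent_ge hε0 hε1.le (by norm_num)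
      · have hβe : β = v₀ := by rw [hβdef, if_neg h3]
        rw [hβe]
        apply Real.rpow_le_rpow_of_exponent_ge hε0 hε1.le
        rw [neg_le_neg_iff]
        exact (div_le_div_iff_of_pos_right hv₀).mpr (by norm_num)
    have hja : |(![a, -2*a, a]) j| ≤ 2 * |a| := by
      fin_cases j <;> simp [abs_mul] <;> linarith [abs_nonneg a]
    have := le_trans hja (le_trans h2a (mul_le_mul_of_nonneg_left hmono hCpos.le))
    split_ifs at this ⊢ <;> exact this
  · -- approximation bound
    intro t ht
    obtain ⟨ht1, ht2⟩ := ht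
    have htabs : |t| ≤ 1 := abs_le.mpr ⟨ht1, ht2⟩
    have hwtabs : |w*t| ≤ w := by
      rw [abs_mul, abs_of_pos hw0]
      nlinarith [abs_nonneg t]
    have hwt1 : |w*t| ≤ 1 := le_trans hwtabs (by linarith)
    have hG := hg (w*t) hwt1
    set G : ℝ := φ (θ₀ + 2*(w*t)) - 2*φ (θ₀ + w*t) + φ θ₀ - D * (w*t)^2 with hGdef
    have hsum : ∑ j, (![a, -2*a, a]) j * φ ((![2*w, w, δ]) j * t + θ₀)
        = a * (φ (θ₀ + 2*(w*t)) - 2*φ (θ₀ + w*t) + φ (δ*t + θ₀)) := by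
      simp [Fin.sum_univ_three]
      rw [show 2*w*t + θ₀ = θ₀ + 2*(w*t) from by ring, show w*t + θ₀ = θ₀ + w*t from by ring]
      ring
    have hkey : t^2 - a * (φ (θ₀ + 2*(w*t)) - 2*φ (θ₀ + w*t) + φ (δ*t + θ₀))
        = -(a * G) - a * (φ (δ*t + θ₀) - φ θ₀) := by
      rw [hGdef, hadef]
      field_simp
      ring
    rw [hsum, hkey]
    have hterm1 : |a| * |G| ≤ ε/2 := by
      have h2β : (2:ℝ) ^ β ≤ 2 := by
        calc (2:ℝ) ^ β ≤ (2:ℝ) ^ (1:ℝ) :=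
              Real.rpow_le_rpow_of_exponent_le one_le_two hβ1
          _ = 2 := Real.rpow_one 2
      have hwtβ : (2*|w*t|) ^ β ≤ 2 ^ β * w ^ β := by
        rw [← Real.mul_rpow (by norm_num) hw0.le]
        exact Real.rpow_le_rpow (by positivity) (by linarith) hβ0.le
      have ht2 : t^2 ≤ 1 := (sq_le_one_iff_abs_le_one t).mpr htabs
      have hwt2 : (w*t)^2 ≤ w^2 := by rw [mul_pow]; nlinarith [sq_nonneg w]
      have hGle : |G| ≤ 2*K*(2 ^ β * w ^ β)*w^2 := by
        refine le_trans hG ?_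
        have hmm := mul_le_mul hwtβ hwt2 (sq_nonneg _)
          (by positivity : (0:ℝ) ≤ 2 ^ β * w ^ β)
        calc 2*K*(2*|w*t|) ^ β * (w*t)^2 = 2*K*((2*|w*t|) ^ β * (w*t)^2) := by ring
          _ ≤ 2*K*((2 ^ β * w ^ β) * w^2) :=
              mul_le_mul_of_nonneg_left hmm (by positivity : (0:ℝ) ≤ 2*K)
          _ = 2*K*(2 ^ β * w ^ β)*w^2 := by ring
      rw [haabs]
      calc 1/(B * w^2) * |G| ≤ 1/(B * w^2) * (2*K*(2 ^ β * w ^ β)*w^2) := by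
            exact mul_le_mul_of_nonneg_left hGle (by positivity)
        _ = 2*K*2 ^ β/B * w ^ β := by field_simp
        _ ≤ 2*K*2/B * (B/(8*K) * ε) := by
            apply mul_le_mul _ hwβ (Real.rpow_nonneg hw0.le _) (by positivity)
            gcongr
        _ = ε/2 := by field_simp; ring
    have hterm2 : |a| * |φ (δ*t + θ₀) - φ θ₀| ≤ ε/2 := by
      have h1 : |φ (δ*t + θ₀) - φ θ₀| ≤ δ := by
        calc |φ (δ*t + θ₀) - φ θ₀| ≤ |δ*t + θ₀ - θ₀| := hLip _ _
          _ = δ * |t| := by rw [show δ*t + θ₀ - θ₀ = δ*t from by ring, abs_mul, abs_of_pos hδ0]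
          _ ≤ δ := by nlinarith
      rw [haabs]
      calc 1/(B * w^2) * |φ (δ*t + θ₀) - φ θ₀| ≤ 1/(B * w^2) * (ε/2 * B * w^2) :=
            mul_le_mul_of_nonneg_left (le_trans h1 hδle) (by positivity)
        _ = ε/2 := by field_simp
    calc |-(a * G) - a * (φ (δ*t + θ₀) - φ θ₀)|
        ≤ |-(a * G)| + |a * (φ (δ*t + θ₀) - φ θ₀)| := abs_sub _ _
      _ = |a| * |G| + |a| * |φ (δ*t + θ₀) - φ θ₀| := by rw [abs_neg, abs_mul, abs_mul]
      _ ≤ ε/2 + ε/2 := add_le_add hterm1 hterm2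
      _ = ε := by ring
end
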